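/- arXiv:2105.05623 — 7 statements merged into one kernel-verified Lean document; each statement's English description precedes it below -/
import Mathlib

section
/- For all t, ω, μ ∈ ℝ with (t+μ, ω) ≠ (0, 0), one has (Re √(−(t + μ + iω)))² ≥ ¼ (|ω| + (t+μ)_-)² / (|ω| + |t+μ|), where x_- := max(−x, 0). -/
/-- For all `t, ω, μ ∈ ℝ` with `(t+μ, ω) ≠ (0,0)`:
`(Re √(-(t+μ+iω)))² ≥ ¼ (|ω| + (t+μ)₋)² / (|ω| + |t+μ|)`, where the principal branch of
the complex square root is realized as `w ^ (1/2 : ℂ)` and `x₋ = max (-x) 0`. -/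
theorem stmt_2 (μ t ω : ℝ) (h : ¬(t + μ = 0 ∧ ω = 0)) :
    ((-(((t + μ : ℝ) : ℂ) + (ω : ℂ) * Complex.I)) ^ ((1 : ℂ) / 2)).re ^ 2
      ≥ (|ω| + max (-(t + μ)) 0) ^ 2 / (4 * (|ω| + |t + μ|)) := by
  set x : ℝ := t + μ with hxdef
  set w : ℂ := -(((x : ℝ) : ℂ) + (ω : ℂ) * Complex.I) with hwdef
  have hwre : w.re = -x := by simp [hwdef]
  have hwim : w.im = -ω := by simp [hwdef]
  have hw0 : w ≠ 0 := by
    intro h0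
    apply h
    constructor
    · have := congrArg Complex.re h0
      simpa [hwre] using this
    · have := congrArg Complex.im h0
      simpa [hwim] using this
  set z : ℂ := w ^ ((1 : ℂ) / 2) with hzdef
  have hz2 : z ^ 2 = w := by
    rw [hzdef, one_div]
    exact_mod_cast Complex.cpow_nat_inv_pow w (two_ne_zero) -- n = 2
  have hre : z.re ^ 2 - z.im ^ 2 = w.re := by
    have := congrArg Complex.re hz2
    simp [pow_two, Complex.mul_re] at this ⊢
    linarith
  have habs : z.re ^ 2 + z.im ^ 2 = ‖w‖ := by
    have h1 : ‖z‖ ^ 2 = ‖w‖ := by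
      rw [← hz2, norm_pow]
    rw [← h1, Complex.sq_norm, Complex.normSq_apply]
    ring
  have ha : z.re ^ 2 = (‖w‖ + w.re) / 2 := by linarith
  have habsw : ‖w‖ = Real.sqrt (x ^ 2 + ω ^ 2) := by
    rw [Complex.norm_def, Complex.normSq_apply, hwre, hwim]
    ring_nf
  set s : ℝ := Real.sqrt (x ^ 2 + ω ^ 2) with hsdef
  have hs0 : 0 ≤ s := Real.sqrt_nonneg _
  have hs2 : s ^ 2 = x ^ 2 + ω ^ 2 := Real.sq_sqrt (by positivity)
  have hsx : |x| ≤ s := by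
    rw [hsdef, ← Real.sqrt_sq_eq_abs]
    exact Real.sqrt_le_sqrt (by nlinarith [sq_nonneg ω])
  have hsω : |ω| ≤ s := by
    rw [hsdef, ← Real.sqrt_sq_eq_abs]
    exact Real.sqrt_le_sqrt (by nlinarith [sq_nonneg x])
  have hdpos : 0 < |ω| + |x| := by
    rcases (not_and_or.mp h) with h1 | h1
    · have : 0 < |x| := abs_pos.mpr h1
      have := abs_nonneg ω
      linarith
    · have : 0 < |ω| := abs_pos.mpr h1
      have := abs_nonneg x
      linarith
  rw [ha, hwre, habsw, ge_iff_le, div_le_div_iff₀ (by linarith) (by norm_num)]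
  rcases le_or_gt x 0 with hx | hx
  · have hmax : max (-x) 0 = -x := max_eq_left (by linarith)
    have habsx : |x| = -x := abs_of_nonpos hx
    rw [hmax, habsx]
    have hω0 := abs_nonneg ω
    nlinarith [hsω, hsx]
  · have hmax : max (-x) 0 = 0 := max_eq_right (by linarith)
    have habsx : |x| = x := abs_of_pos hx
    rw [hmax, habsx]
    have hω0 := abs_nonneg ω
    have hωsq : |ω| ^ 2 = ω ^ 2 := sq_abs ω
    have hsx' : x ≤ s := le_trans (le_abs_self x) hsx
    nlinarith [mul_nonneg (sub_nonneg.mpr hsx') hω0, sq_nonneg (s - x)]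
end

section
/- For every μ ∈ ℝ and every a > −2 there is a constant C_a > 0 such that for all t, ω ∈ ℝ with iω + t ∉ [−μ, ∞) one has ∫_{ℝ³} |x|^a |g_0^{iω+t}(x)| dx ≤ C_a f(t, ω)^{1 + a/2}. -/
open MeasureTheory

/-- The free resolvent kernel `g_0^z(x) = -(1/(4π|x|)) e^{-√(-(z+μ)) |x|}` on `ℝ³`,
with the principal branch of the complex square root realized as `w ^ (1/2 : ℂ)`. -/
noncomputable def g0 (μ : ℝ) (z : ℂ) (x : EuclideanSpace ℝ (Fin 3)) : ℂ :=
  (↑(-(4 * Real.pi * ‖x‖)⁻¹) : ℂ) *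
    Complex.exp (-((-(z + (μ : ℂ))) ^ ((1 : ℂ) / 2)) * (‖x‖ : ℂ))


private lemma stmt3_aux (a s ω κ A : ℝ) (ha : -2 < a) (hκpos : 0 < κ)
    (hκ2 : κ ^ 2 = (A - s)/2) (hA0 : 0 ≤ A) (hA2 : A ^ 2 = s ^ 2 + ω ^ 2)
    (hns : ¬(ω = 0 ∧ 0 ≤ s)) :
    (1/κ) ^ (a+2) ≤ 2 ^ (a+2) * ((|ω| + |s|) / (|ω| + max (-s) 0) ^ 2) ^ (1 + a/2) := by
  set N : ℝ := |ω| + |s| with hN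
  set D : ℝ := |ω| + max (-s) 0 with hD
  have habs : |ω| ^ 2 = ω ^ 2 := sq_abs ω
  have hωpos : ω ≠ 0 → 0 < |ω| := fun h => abs_pos.mpr h
  have hDpos : 0 < D := by
    rcases eq_or_ne ω 0 with hω | hω
    · have hslt : s < 0 := by by_contra h; exact hns ⟨hω, not_lt.mp h⟩
      have : max (-s) 0 = -s := max_eq_left (by linarith)
      rw [hD, this, hω]
      simp; linarith
    · have := le_max_right (-s) (0:ℝ)
      have := hωpos hω
      rw [hD]; linarith
  have hNpos : 0 < N := by
    rcases eq_or_ne ω 0 with hω | hω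
    · have hslt : s < 0 := by by_contra h; exact hns ⟨hω, not_lt.mp h⟩
      have : 0 < |s| := abs_pos.mpr (by linarith)
      rw [hN]; linarith [abs_nonneg ω]
    · have := hωpos hω
      rw [hN]; linarith [abs_nonneg s]
  have hkey : D ^ 2 ≤ 2 * (A - s) * N := by
    rcases le_total s 0 with h | h
    · have h1 : max (-s) 0 = -s := max_eq_left (by linarith)
      have h2 : |s| = -s := abs_of_nonpos h
      rw [hD, hN, h1, h2]
      nlinarith [abs_nonneg ω, sq_nonneg (|ω| + s), sq_nonneg (2*A - |ω| + s)]
    · have h1 : max (-s) 0 = 0 := max_eq_right (by linarith)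
      have h2 : |s| = s := abs_of_nonneg h
      rw [hD, hN, h1, h2]
      have hAs : s ≤ A := by nlinarith
      have hAle : A ≤ s + |ω| := by nlinarith [abs_nonneg ω]
      nlinarith [mul_nonneg (sub_nonneg.2 hAs)
        (sub_nonneg.2 (show A ≤ 2*|ω| + s by linarith [abs_nonneg ω]))]
  have hF : 0 < N / D ^ 2 := by positivity
  have h2le : 1 ≤ 4 * (N / D ^ 2) * κ ^ 2 := by
    rw [hκ2, show 4 * (N / D ^ 2) * ((A - s)/2) = (2 * (A - s) * N) / D ^ 2 by ring]
    exact (one_le_div (by positivity)).mpr hkey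
  have hsq : 1 ≤ 2 * Real.sqrt (N / D ^ 2) * κ := by
    have h1 : (2 * Real.sqrt (N / D ^ 2) * κ) ^ 2 = 4 * (N / D ^ 2) * κ ^ 2 := by
      rw [mul_pow, mul_pow, Real.sq_sqrt hF.le]; ring
    nlinarith [Real.sqrt_nonneg (N / D ^ 2), hκpos.le,
      mul_nonneg (mul_nonneg (by norm_num : (0:ℝ) ≤ 2) (Real.sqrt_nonneg (N / D ^ 2))) hκpos.le]
  have hinv : 1/κ ≤ 2 * Real.sqrt (N / D ^ 2) := by
    rw [div_le_iff₀ hκpos]; linarith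
  calc (1/κ) ^ (a+2) ≤ (2 * Real.sqrt (N / D ^ 2)) ^ (a+2) :=
        Real.rpow_le_rpow (by positivity) hinv (by linarith)
    _ = 2 ^ (a+2) * (N / D ^ 2) ^ (1 + a/2) := by
        rw [Real.mul_rpow (by norm_num) (Real.sqrt_nonneg _), Real.sqrt_eq_rpow,
          ← Real.rpow_mul hF.le, show 1 / 2 * (a + 2) = 1 + a / 2 by ring]

/-- For every `μ ∈ ℝ` and `a > -2` there is `C_a > 0` such that for all `t, ω ∈ ℝ` with
`iω + t ∉ [-μ, ∞)`:
`∫_{ℝ³} |x|^a |g_0^{iω+t}(x)| dx ≤ C_a f(t,ω)^(1+a/2)`, where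
`f(t,ω) = (|ω| + |t+μ|)/(|ω| + (t+μ)₋)²`. -/
theorem stmt_3 (μ : ℝ) (a : ℝ) (ha : -2 < a) :
    ∃ C > 0, ∀ t ω : ℝ,
      (∀ r : ℝ, -μ ≤ r → Complex.I * (ω : ℂ) + (t : ℂ) ≠ (r : ℂ)) →
      ∫ x : EuclideanSpace ℝ (Fin 3),
          ‖x‖ ^ a * ‖g0 μ (Complex.I * (ω : ℂ) + (t : ℂ)) x‖
        ≤ C * ((|ω| + |t + μ|) / (|ω| + max (-(t + μ)) 0) ^ 2) ^ (1 + a / 2) := by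
  have hπ : (0:ℝ) < Real.pi := Real.pi_pos
  set V : ℝ := (volume (Metric.ball (0 : EuclideanSpace ℝ (Fin 3)) 1)).toReal with hV
  have hVpos : 0 < V := by
    rw [hV]
    exact ENNReal.toReal_pos (Metric.measure_ball_pos _ _ one_pos).ne' measure_ball_lt_top.ne
  have hΓ : 0 < Real.Gamma (a + 2) := Real.Gamma_pos_of_pos (by linarith)
  refine ⟨3 * V * (4 * Real.pi)⁻¹ * Real.Gamma (a + 2) * 2 ^ (a + 2), by positivity, ?_⟩
  intro t ω hz
  set s : ℝ := t + μ with hs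
  set z : ℂ := Complex.I * (ω : ℂ) + (t : ℂ) with hzdef
  have hwre : (-(z + (μ:ℂ))).re = -s := by simp [hzdef, hs]
  have hwim : (-(z + (μ:ℂ))).im = -ω := by simp [hzdef]
  have hns : ¬(ω = 0 ∧ 0 ≤ s) := by
    rintro ⟨h1, h2⟩
    exact hz t (by simp only [hs] at h2; linarith) (by rw [hzdef, h1]; simp)
  have hw0 : (-(z + (μ:ℂ))) ≠ 0 := by
    intro h
    apply hns
    constructor
    · have := congrArg Complex.im h; rw [hwim] at this; simpa using this
    · have := congrArg Complex.re h; rw [hwre] at this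
      simp at this; simp [this]
  set u : ℂ := (-(z + (μ:ℂ))) ^ ((1:ℂ)/2) with hu
  set κ : ℝ := u.re with hκ
  set A : ℝ := ‖(-(z + (μ:ℂ)))‖ with hA
  have hu2 : u ^ 2 = -(z + (μ:ℂ)) := by
    rw [hu, sq, ← Complex.cpow_add _ _ hw0]; norm_num
  have hA0 : 0 ≤ A := norm_nonneg _
  have hA2 : A ^ 2 = s ^ 2 + ω ^ 2 := by
    rw [hA, Complex.sq_norm, Complex.normSq_apply, hwre, hwim]; ring
  have hκ2 : κ ^ 2 = (A - s) / 2 := by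
    have h1 : (u ^ 2).re = κ ^ 2 - u.im ^ 2 := by rw [sq, Complex.mul_re]; ring
    have h2 : A = κ ^ 2 + u.im ^ 2 := by
      rw [hA, ← hu2, norm_pow, Complex.sq_norm, Complex.normSq_apply]; ring
    rw [hu2, hwre] at h1
    linarith
  have hκ0 : 0 ≤ κ := by
    rw [hκ, hu, Complex.cpow_def_of_ne_zero hw0, Complex.exp_re]
    have h1 : (Complex.log (-(z + (μ:ℂ))) * ((1:ℂ)/2)).im = (-(z + (μ:ℂ))).arg / 2 := by
      simp [Complex.mul_im, Complex.log_im]; ring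
    rw [h1]
    have := Complex.neg_pi_lt_arg (-(z + (μ:ℂ)))
    have := Complex.arg_le_pi (-(z + (μ:ℂ)))
    have hc : 0 ≤ Real.cos ((-(z + (μ:ℂ))).arg / 2) :=
      Real.cos_nonneg_of_mem_Icc ⟨by linarith [Real.pi_pos], by linarith⟩
    positivity
  have hκpos : 0 < κ := by
    have hq : 0 < κ ^ 2 := by
      rw [hκ2]
      rcases eq_or_ne ω 0 with hω | hω
      · have hslt : s < 0 := by
          by_contra h; exact hns ⟨hω, by linarith [not_lt.mp h]⟩
        linarith
      · nlinarith [hA2, hA0, show (0:ℝ) < ω^2 by positivity]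
    rcases hκ0.lt_or_eq with h | h
    · exact h
    · exfalso; rw [← h] at hq; simp at hq
  -- the radial profile
  set G : ℝ → ℝ := fun r => r ^ a * ((4*Real.pi*r)⁻¹ * Real.exp (-(κ*r))) with hG
  have step1 : ∀ x : EuclideanSpace ℝ (Fin 3),
      ‖x‖ ^ a * ‖g0 μ z x‖ = G ‖x‖ := by
    intro x
    rw [g0, norm_mul, Complex.norm_real, Real.norm_eq_abs, Complex.norm_exp, hG]
    have h1 : |(-(4*Real.pi*‖x‖)⁻¹)| = (4*Real.pi*‖x‖)⁻¹ := by
      rw [abs_neg, abs_of_nonneg]; positivity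
    have h2 : (-((-(z + (μ:ℂ))) ^ ((1:ℂ)/2)) * (‖x‖:ℂ)).re = -(κ * ‖x‖) := by
      rw [hκ, hu]; simp [Complex.mul_re]
    rw [h1, h2]
  have hinner : ∫ y in Set.Ioi (0:ℝ), y ^ (2:ℕ) • G y
      = (4*Real.pi)⁻¹ * ((1/κ)^(a+2) * Real.Gamma (a+2)) := by
    have hpt : ∀ y ∈ Set.Ioi (0:ℝ), y ^ (2:ℕ) • G y
        = (4*Real.pi)⁻¹ * (y ^ ((a+2)-1) * Real.exp (-(κ*y))) := by
      intro y hy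
      have hy0 : 0 < y := hy
      have h1 : y ^ ((a+2)-1) = y ^ a * y := by
        rw [show (a+2)-1 = a + 1 by ring, Real.rpow_add_one hy0.ne']
      rw [hG]
      simp only [smul_eq_mul]
      rw [h1]
      field_simp
    rw [setIntegral_congr_fun measurableSet_Ioi hpt, integral_const_mul,
      Real.integral_rpow_mul_exp_neg_mul_Ioi (by linarith) hκpos]
  have hrw : (∫ x : EuclideanSpace ℝ (Fin 3), ‖x‖ ^ a * ‖g0 μ z x‖)
      = 3 * V * (4*Real.pi)⁻¹ * Real.Gamma (a+2) * (1/κ)^(a+2) := by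
    simp only [step1]
    have := MeasureTheory.integral_fun_norm_addHaar
      (volume : Measure (EuclideanSpace ℝ (Fin 3))) G
    simp only [finrank_euclideanSpace, Fintype.card_fin] at this
    rw [this, hinner, measureReal_def, ← hV]
    simp only [nsmul_eq_mul, smul_eq_mul]
    push_cast
    ring
  rw [hrw]
  have hmain := stmt3_aux a s ω κ A ha hκpos hκ2 hA0 hA2 hns
  have hc : (0:ℝ) ≤ 3 * V * (4*Real.pi)⁻¹ * Real.Gamma (a+2) := by positivity
  calc 3 * V * (4*Real.pi)⁻¹ * Real.Gamma (a+2) * (1/κ)^(a+2)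
      ≤ 3 * V * (4*Real.pi)⁻¹ * Real.Gamma (a+2)
          * (2 ^ (a+2) * ((|ω| + |s|) / (|ω| + max (-s) 0) ^ 2) ^ (1 + a/2)) :=
        mul_le_mul_of_nonneg_left hmain hc
    _ = 3 * V * (4 * Real.pi)⁻¹ * Real.Gamma (a + 2) * 2 ^ (a + 2)
          * ((|ω| + |s|) / (|ω| + max (-s) 0) ^ 2) ^ (1 + a / 2) := by ring
end

section
/- For every μ ∈ ℝ there is a constant C > 0 such that for every temperature T > 0 and every n ∈ ℤ, the Matsubara frequency ω_n := π(2n+1)T satisfies f(0, ω_n) ≤ C (T^{−1} + T^{−2}) |2n+1|^{−1}. -/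
/-- For every `μ ∈ ℝ` there is `C > 0` such that for every `T > 0` and `n ∈ ℤ`, the
Matsubara frequency `ω_n = π(2n+1)T` satisfies
`f(0, ω_n) = (|ω_n| + |μ|)/(|ω_n| + μ₋)² ≤ C (T⁻¹ + T⁻²) |2n+1|⁻¹`,
where `x₋ = max (-x) 0`. -/
theorem stmt_6 (μ : ℝ) :
    ∃ C > 0, ∀ T : ℝ, 0 < T → ∀ n : ℤ,
      (|Real.pi * (2 * (n : ℝ) + 1) * T| + |μ|)
          / (|Real.pi * (2 * (n : ℝ) + 1) * T| + max (-μ) 0) ^ 2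
        ≤ C * (T⁻¹ + (T ^ 2)⁻¹) * |2 * (n : ℝ) + 1|⁻¹ := by
  have hπ := Real.pi_pos
  refine ⟨1 + Real.pi + |μ| + Real.pi ^ 2, by positivity, ?_⟩
  intro T hT n
  set k : ℝ := |2 * (n : ℝ) + 1| with hk
  have hk1 : (1 : ℝ) ≤ k := by
    have h0 : (1 : ℤ) ≤ |2 * n + 1| := Int.one_le_abs (by omega)
    have : (1 : ℝ) ≤ |((2 * n + 1 : ℤ) : ℝ)| := by exact_mod_cast h0
    simpa [hk] using this
  have hkpos : (0 : ℝ) < k := lt_of_lt_of_le one_pos hk1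
  have habs : |Real.pi * (2 * (n : ℝ) + 1) * T| = Real.pi * k * T := by
    rw [abs_mul, abs_mul, abs_of_pos hπ, abs_of_pos hT]
  rw [habs]
  have hm : (0 : ℝ) ≤ max (-μ) 0 := le_max_right _ _
  have ha : (0 : ℝ) < Real.pi * k * T := by positivity
  have step1 : (Real.pi * k * T + |μ|) / (Real.pi * k * T + max (-μ) 0) ^ 2
      ≤ (Real.pi * k * T + |μ|) / (Real.pi * k * T) ^ 2 := by
    gcongr
    exact le_add_of_nonneg_right hm
  refine step1.trans ?_
  rw [div_le_iff₀ (by positivity)]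
  have hT' : T ≠ 0 := ne_of_gt hT
  have hk' : k ≠ 0 := ne_of_gt hkpos
  have habs0 : (0 : ℝ) ≤ |μ| := abs_nonneg μ
  have key : (1 + Real.pi + |μ| + Real.pi ^ 2) * (T⁻¹ + (T ^ 2)⁻¹) * k⁻¹
      * (Real.pi * k * T) ^ 2
      = (1 + Real.pi + |μ| + Real.pi ^ 2) * ((T + 1) * k * Real.pi ^ 2) := by
    field_simp
  rw [key]
  have hπ1 : (1 : ℝ) ≤ Real.pi := by linarith [Real.pi_gt_three]
  have hπ2 : (1 : ℝ) ≤ Real.pi ^ 2 := by nlinarith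
  have h3 : k * T ≤ (T + 1) * k * Real.pi ^ 2 := by
    nlinarith [mul_le_mul_of_nonneg_left hπ2 (mul_nonneg hkpos.le hT.le),
      mul_nonneg hkpos.le (sq_nonneg Real.pi)]
  have h4 : Real.pi * (k * T) ≤ Real.pi * ((T + 1) * k * Real.pi ^ 2) :=
    mul_le_mul_of_nonneg_left h3 hπ.le
  have hq : (1 : ℝ) ≤ (T + 1) * k * Real.pi ^ 2 := by nlinarith
  have h5 : |μ| ≤ |μ| * ((T + 1) * k * Real.pi ^ 2) := le_mul_of_one_le_right habs0 hq
  have hq0 : (0 : ℝ) ≤ (T + 1) * k * Real.pi ^ 2 := by linarith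
  nlinarith [h4, h5, hq0]
end

section
/- For every μ ∈ ℝ there is a constant C > 0 such that for every temperature T > 0 and every n ∈ ℤ one has ∫_{ℝ³} |g_0^{iω_n}(x)| dx ≤ C (T^{−1} + T^{−2}) |2n+1|^{−1}, where ω_n := π(2n+1)T. -/
open MeasureTheory

open Real Set in
/-- The modulus of the kernel is a radial function. -/
lemma g0_abs_eq (μ : ℝ) (z : ℂ) (x : EuclideanSpace ℝ (Fin 3)) :
    ‖g0 μ z x‖
      = |(4 * Real.pi * ‖x‖)⁻¹| *
        Real.exp (-((((-(z + (μ : ℂ))) ^ ((1:ℂ)/2)).re) * ‖x‖)) := by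
  unfold g0
  rw [norm_mul, Complex.norm_real, Real.norm_eq_abs, Complex.norm_exp, abs_neg]
  congr 2
  simp [Complex.mul_re]

open Real Set in
/-- The integral of the radial profile over `ℝ³`. -/
lemma g0_radial_integral (a : ℝ) (ha : 0 < a) :
    ∫ x : EuclideanSpace ℝ (Fin 3), |(4 * Real.pi * ‖x‖)⁻¹| * Real.exp (-(a * ‖x‖))
      = 3 * (volume (Metric.ball (0 : EuclideanSpace ℝ (Fin 3)) 1)).toReal
          * ((4 * Real.pi)⁻¹ * (a ^ 2)⁻¹) := by
  refine (integral_fun_norm_addHaar volume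
    (fun r => |(4 * Real.pi * r)⁻¹| * Real.exp (-(a * r)))).trans ?_
  rw [finrank_euclideanSpace_fin]
  rw [nsmul_eq_mul, smul_eq_mul]
  have hinner : ∫ y in Ioi (0:ℝ),
      y ^ (3 - 1) • (|(4 * Real.pi * y)⁻¹| * Real.exp (-(a * y)))
      = (4 * Real.pi)⁻¹ * (a ^ 2)⁻¹ := by
    rw [setIntegral_congr_fun measurableSet_Ioi
      (g := fun y => (4 * Real.pi)⁻¹ * (y ^ ((2:ℝ) - 1) * Real.exp (-(a * y))))]
    · rw [integral_const_mul, integral_rpow_mul_exp_neg_mul_Ioi two_pos ha, Real.Gamma_two]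
      rw [mul_one, one_div, show ((2:ℝ)) = ((2:ℕ):ℝ) by norm_num,
        Real.rpow_natCast, inv_pow]
    · intro y hy
      have hy0 : (0:ℝ) < y := hy
      have h1 : |(4 * Real.pi * y)⁻¹| = (4 * Real.pi * y)⁻¹ :=
        abs_of_nonneg (by positivity)
      have h2 : y ^ ((2:ℝ) - 1) = y := by norm_num
      simp only [smul_eq_mul, h1, h2]
      field_simp
  rw [hinner]
  push_cast
  simp only [measureReal_def]
  ring

/-- Bounds on the real part of the principal square root of `-(iω + μ)`. -/
lemma sqrt_re_bounds (μ ω : ℝ) (hω : ω ≠ 0) :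
    0 < ((-(Complex.I * (ω : ℂ) + (μ : ℂ))) ^ ((1:ℂ)/2)).re ∧
    ω ^ 2 ≤ ((-(Complex.I * (ω : ℂ) + (μ : ℂ))) ^ ((1:ℂ)/2)).re ^ 2 * (4 * (|μ| + |ω|)) := by
  set w : ℂ := -(Complex.I * (ω : ℂ) + (μ : ℂ)) with hw
  have hwre : w.re = -μ := by simp [hw]
  have hwim : w.im = -ω := by simp [hw]
  have hw0 : w ≠ 0 := by
    intro h
    apply hω
    have := congrArg Complex.im h
    rw [hwim] at this
    simpa using this
  set s : ℂ := w ^ ((1:ℂ)/2) with hs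
  have hss : s * s = w := by
    rw [hs, ← Complex.cpow_add _ _ hw0]
    norm_num
  have ha0 : 0 ≤ s.re := by
    rw [hs, Complex.cpow_def_of_ne_zero hw0, Complex.exp_re]
    apply mul_nonneg (Real.exp_nonneg _)
    apply Real.cos_nonneg_of_mem_Icc
    constructor
    · have := Complex.neg_pi_lt_arg w
      simp [Complex.log_im]
      nlinarith [Real.pi_pos]
    · have := Complex.arg_le_pi w
      simp [Complex.log_im]
      nlinarith
  set a := s.re with hadef
  set A := ‖w‖ with hA
  have hA0 : 0 ≤ A := norm_nonneg w
  have hAsq : A ^ 2 = μ ^ 2 + ω ^ 2 := by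
    rw [hA, Complex.sq_norm, Complex.normSq_apply, hwre, hwim]; ring
  have hns : Complex.normSq s = A := by
    have h1 : Complex.normSq s * Complex.normSq s = A ^ 2 := by
      rw [← Complex.normSq_mul, hss, hA, Complex.sq_norm]
    nlinarith [Complex.normSq_nonneg s]
  have hre : (s * s).re = -μ := by rw [hss, hwre]
  have h2a : 2 * a ^ 2 = A - μ := by
    have e1 : Complex.normSq s = a ^ 2 + s.im ^ 2 := by
      rw [Complex.normSq_apply]; ring
    have e2 : (s * s).re = a ^ 2 - s.im ^ 2 := by
      rw [Complex.mul_re]; ring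
    rw [e1] at hns; rw [e2] at hre
    linarith
  have hω2 : 0 < ω ^ 2 := by positivity
  have hAμ : μ < A := by nlinarith [abs_nonneg μ, le_abs_self μ, sq_abs μ]
  have hapos : 0 < a := by
    rcases lt_or_eq_of_le ha0 with h | h
    · exact h
    · exfalso; nlinarith
  refine ⟨hapos, ?_⟩
  have hAle : A ≤ |μ| + |ω| := by
    nlinarith [abs_nonneg μ, abs_nonneg ω, sq_abs μ, sq_abs ω]
  have hμle : μ ≤ |μ| := le_abs_self μ
  nlinarith [h2a, hAle, hμle,
    mul_le_mul_of_nonneg_left (show A + μ ≤ 2 * (|μ| + |ω|) by nlinarith)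
      (le_of_lt (show (0:ℝ) < A - μ by linarith))]

open Real in
/-- Elementary arithmetic bound. -/
lemma arith_bound (V P T K m ainv : ℝ) (hV : 0 ≤ V) (hP : 0 < P) (hT : 0 < T)
    (hK : 1 ≤ K) (hm : 0 ≤ m)
    (hax : ainv ≤ (4 * (m + P * K * T)) / (P ^ 2 * K ^ 2 * T ^ 2)) :
    3 * V * ((4 * P)⁻¹ * ainv)
      ≤ (3 * V / P * (m / P ^ 2 + 1 / P) + 1) * (T⁻¹ + (T ^ 2)⁻¹) * K⁻¹ := by
  have hK0 : (0:ℝ) < K := lt_of_lt_of_le one_pos hK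
  have step : 3 * V * ((4 * P)⁻¹ * ainv)
      ≤ 3 * V * ((4 * P)⁻¹ * ((4 * (m + P * K * T)) / (P ^ 2 * K ^ 2 * T ^ 2))) := by
    gcongr
  refine le_trans step ?_
  have e : 3 * V * ((4 * P)⁻¹ * ((4 * (m + P * K * T)) / (P ^ 2 * K ^ 2 * T ^ 2)))
      = (3 * V / P) * (m / P ^ 2) * ((T ^ 2)⁻¹ * (K ^ 2)⁻¹)
        + (3 * V / P) * (1 / P) * (T⁻¹ * K⁻¹) := by
    field_simp
  rw [e]
  have iK : (K ^ 2)⁻¹ ≤ K⁻¹ := by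
    apply inv_anti₀ hK0
    nlinarith
  have i1 : (T ^ 2)⁻¹ * (K ^ 2)⁻¹ ≤ (T⁻¹ + (T ^ 2)⁻¹) * K⁻¹ := by
    calc (T ^ 2)⁻¹ * (K ^ 2)⁻¹ ≤ (T ^ 2)⁻¹ * K⁻¹ := by gcongr
      _ ≤ (T⁻¹ + (T ^ 2)⁻¹) * K⁻¹ := by
          gcongr
          exact le_add_of_nonneg_left (by positivity)
  have i2 : T⁻¹ * K⁻¹ ≤ (T⁻¹ + (T ^ 2)⁻¹) * K⁻¹ := by
    gcongr
    exact le_add_of_nonneg_right (by positivity)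
  have hcoef1 : (0:ℝ) ≤ (3 * V / P) * (m / P ^ 2) := by positivity
  have hcoef2 : (0:ℝ) ≤ (3 * V / P) * (1 / P) := by positivity
  have hQ : (0:ℝ) ≤ (T⁻¹ + (T ^ 2)⁻¹) * K⁻¹ := by positivity
  calc (3 * V / P) * (m / P ^ 2) * ((T ^ 2)⁻¹ * (K ^ 2)⁻¹)
        + (3 * V / P) * (1 / P) * (T⁻¹ * K⁻¹)
      ≤ (3 * V / P) * (m / P ^ 2) * ((T⁻¹ + (T ^ 2)⁻¹) * K⁻¹)
        + (3 * V / P) * (1 / P) * ((T⁻¹ + (T ^ 2)⁻¹) * K⁻¹) := by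
        gcongr
    _ ≤ (3 * V / P * (m / P ^ 2 + 1 / P) + 1) * (T⁻¹ + (T ^ 2)⁻¹) * K⁻¹ := by
        nlinarith

/-- For every `μ ∈ ℝ` there is `C > 0` such that for every `T > 0` and `n ∈ ℤ`:
`∫_{ℝ³} |g_0^{iω_n}(x)| dx ≤ C (T⁻¹ + T⁻²) |2n+1|⁻¹`, where `ω_n = π(2n+1)T`. -/
theorem stmt_8 (μ : ℝ) :
    ∃ C > 0, ∀ T : ℝ, 0 < T → ∀ n : ℤ,
      ∫ x : EuclideanSpace ℝ (Fin 3),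
          ‖g0 μ (Complex.I * ((Real.pi * (2 * (n : ℝ) + 1) * T : ℝ) : ℂ)) x‖
        ≤ C * (T⁻¹ + (T ^ 2)⁻¹) * |2 * (n : ℝ) + 1|⁻¹ := by
  have hπ : (0:ℝ) < Real.pi := Real.pi_pos
  set V : ℝ := (volume (Metric.ball (0 : EuclideanSpace ℝ (Fin 3)) 1)).toReal with hVdef
  have hV : 0 ≤ V := ENNReal.toReal_nonneg
  refine ⟨3 * V / Real.pi * (|μ| / Real.pi ^ 2 + 1 / Real.pi) + 1, by positivity, ?_⟩
  intro T hT n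
  set k : ℝ := 2 * (n : ℝ) + 1 with hkdef
  have hk1 : (1:ℝ) ≤ |k| := by
    have hZ : (2 * n + 1 : ℤ) ≠ 0 := by omega
    have h1 : (1:ℤ) ≤ |2 * n + 1| := Int.one_le_abs hZ
    have h2 : ((|2 * n + 1| : ℤ) : ℝ) = |k| := by
      push_cast [hkdef]
      ring_nf
    calc (1:ℝ) = ((1:ℤ) : ℝ) := by norm_num
      _ ≤ ((|2 * n + 1| : ℤ) : ℝ) := by exact_mod_cast h1
      _ = |k| := h2
  have hk0 : k ≠ 0 := by
    intro h
    rw [h, abs_zero] at hk1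
    linarith
  set ω : ℝ := Real.pi * k * T with hωdef
  have hω0 : ω ≠ 0 := mul_ne_zero (mul_ne_zero hπ.ne' hk0) hT.ne'
  obtain ⟨ha, hb⟩ := sqrt_re_bounds μ ω hω0
  set a : ℝ := ((-(Complex.I * (ω : ℂ) + (μ : ℂ))) ^ ((1:ℂ)/2)).re with hadef
  have habs : |ω| = Real.pi * |k| * T := by
    rw [hωdef, abs_mul, abs_mul, abs_of_pos hπ, abs_of_pos hT]
  have hsq : ω ^ 2 = Real.pi ^ 2 * |k| ^ 2 * T ^ 2 := by
    rw [hωdef, sq_abs]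
    ring
  have hrw : ∀ x : EuclideanSpace ℝ (Fin 3),
      ‖g0 μ (Complex.I * ((ω : ℝ) : ℂ)) x‖
        = |(4 * Real.pi * ‖x‖)⁻¹| * Real.exp (-(a * ‖x‖)) := by
    intro x
    rw [g0_abs_eq]
  rw [show (∫ x : EuclideanSpace ℝ (Fin 3),
      ‖g0 μ (Complex.I * ((Real.pi * (2 * (n : ℝ) + 1) * T : ℝ) : ℂ)) x‖)
      = ∫ x : EuclideanSpace ℝ (Fin 3),
        |(4 * Real.pi * ‖x‖)⁻¹| * Real.exp (-(a * ‖x‖)) from integral_congr_ae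
          (Filter.Eventually.of_forall (fun x => hrw x))]
  rw [g0_radial_integral a ha]
  have hax : (a ^ 2)⁻¹ ≤ (4 * (|μ| + Real.pi * |k| * T))
      / (Real.pi ^ 2 * |k| ^ 2 * T ^ 2) := by
    have hX : (0:ℝ) < 4 * (|μ| + Real.pi * |k| * T) := by
      have : (0:ℝ) < Real.pi * |k| * T := by positivity
      nlinarith [abs_nonneg μ]
    have h2 : Real.pi ^ 2 * |k| ^ 2 * T ^ 2 ≤ a ^ 2 * (4 * (|μ| + Real.pi * |k| * T)) := by
      rw [← hsq, ← habs]
      exact hb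
    have h3 : (a ^ 2)⁻¹ = (4 * (|μ| + Real.pi * |k| * T))
        / (a ^ 2 * (4 * (|μ| + Real.pi * |k| * T))) := by
      field_simp
    rw [h3]
    apply div_le_div_of_nonneg_left hX.le (by positivity) h2
  exact arith_bound V Real.pi T |k| |μ| ((a ^ 2)⁻¹) hV hπ hT hk1 (abs_nonneg μ) hax
end

section
/- For every β > 0 and all E, E' ∈ ℝ with E + E' ≠ 0, the series Σ_{n∈ℤ} [(iω_n − E)(iω_n + E')]^{−1} converges absolutely and −(2/β) Σ_{n∈ℤ} 1/((iω_n − E)(iω_n + E')) = (tanh(βE/2) + tanh(βE'/2)) / (E + E'), where ω_n := π(2n+1)/β. -/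
open Real Complex MeasureTheory intervalIntegral

local instance fact02 : Fact ((0:ℝ) < 2) := ⟨by norm_num⟩

noncomputable def coshCirc (a : ℝ) : AddCircle (2:ℝ) → ℂ :=
  AddCircle.liftIco 2 0 (fun x : ℝ => Complex.cosh (a * (x - 1)))

lemma coshCirc_apply (a : ℝ) {x : ℝ} (hx : x ∈ Set.Ico (0:ℝ) 2) :
    coshCirc a (x : AddCircle (2:ℝ)) = Complex.cosh ((a:ℂ) * ((x:ℂ) - 1)) :=
  AddCircle.liftIco_zero_coe_apply hx

lemma c1ne (a : ℝ) (ha : a ≠ 0) (n : ℤ) : (a:ℂ) - Real.pi * Complex.I * n ≠ 0 := by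
  intro hc
  have := congrArg Complex.re hc
  simp at this
  exact ha this

lemma c2ne (a : ℝ) (ha : a ≠ 0) (n : ℤ) : -(a:ℂ) - Real.pi * Complex.I * n ≠ 0 := by
  intro hc
  have := congrArg Complex.re hc
  simp at this
  exact ha this

lemma fourierCoeff_coshCirc (a : ℝ) (ha : a ≠ 0) (n : ℤ) :
    fourierCoeff (coshCirc a) n = ((Real.sinh a * a / (a^2 + Real.pi^2 * n^2) : ℝ) : ℂ) := by
  rw [fourierCoeff_eq_intervalIntegral (coshCirc a) n 0]
  have key : ∫ x in (0:ℝ)..0+2, (fourier (-n) (x : AddCircle (2:ℝ)) : ℂ) • coshCirc a x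
      = ∫ x in (0:ℝ)..0+2,
          (Complex.exp (((a:ℂ) - Real.pi * Complex.I * n) * x) * (Complex.exp (-(a:ℂ)) / 2)
          + Complex.exp ((-(a:ℂ) - Real.pi * Complex.I * n) * x) * (Complex.exp (a:ℂ) / 2)) := by
    apply intervalIntegral.integral_congr_ae
    have h2 : ∀ᵐ (x:ℝ), x ≠ 2 := by
      rw [MeasureTheory.ae_iff]
      simpa using Real.volume_singleton (a := 2)
    filter_upwards [h2] with x hx2 hx
    rw [Set.uIoc_of_le (by norm_num : (0:ℝ) ≤ 0+2)] at hx
    have hx' : x ∈ Set.Ico (0:ℝ) 2 := ⟨hx.1.le, lt_of_le_of_ne (by linarith [hx.2]) hx2⟩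
    rw [coshCirc_apply a hx', smul_eq_mul, fourier_coe_apply]
    rw [Complex.cosh, ← mul_div_assoc, mul_add, ← Complex.exp_add, ← Complex.exp_add,
      ← mul_div_assoc, ← mul_div_assoc, ← Complex.exp_add, ← Complex.exp_add]
    push_cast
    ring_nf
  rw [key, intervalIntegral.integral_add
      (by apply Continuous.intervalIntegrable; fun_prop)
      (by apply Continuous.intervalIntegrable; fun_prop),
    intervalIntegral.integral_mul_const, intervalIntegral.integral_mul_const,
    integral_exp_mul_complex (c1ne a ha n), integral_exp_mul_complex (c2ne a ha n)]
  have e1 : Complex.exp (((a:ℂ) - Real.pi * Complex.I * n) * (((0:ℝ)+2 : ℝ) : ℂ))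
      = Complex.exp (a:ℂ) * Complex.exp (a:ℂ) := by
    rw [show ((a:ℂ) - Real.pi * Complex.I * n) * (((0:ℝ)+2 : ℝ) : ℂ)
        = ((a:ℂ) + a) + ((-n : ℤ) : ℂ) * (2 * Real.pi * Complex.I) by push_cast; ring,
      Complex.exp_add, Complex.exp_int_mul_two_pi_mul_I, mul_one, Complex.exp_add]
  have e2 : Complex.exp ((-(a:ℂ) - Real.pi * Complex.I * n) * (((0:ℝ)+2 : ℝ) : ℂ))
      = (Complex.exp (a:ℂ))⁻¹ * (Complex.exp (a:ℂ))⁻¹ := by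
    rw [show (-(a:ℂ) - Real.pi * Complex.I * n) * (((0:ℝ)+2 : ℝ) : ℂ)
        = (-(a:ℂ) + -a) + ((-n : ℤ) : ℂ) * (2 * Real.pi * Complex.I) by push_cast; ring,
      Complex.exp_add, Complex.exp_int_mul_two_pi_mul_I, mul_one, Complex.exp_add,
      Complex.exp_neg]
  have hden : ((a:ℂ)^2 + (Real.pi:ℂ)^2 * (n:ℂ)^2) ≠ 0 := by
    have h0 : (0:ℝ) < a^2 + Real.pi^2 * n^2 := by
      have : 0 < a^2 := by positivity
      nlinarith [sq_nonneg ((Real.pi:ℝ) * n)]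
    rw [show ((a:ℂ)^2 + (Real.pi:ℂ)^2 * (n:ℂ)^2) = ((a^2 + Real.pi^2 * n^2 : ℝ) : ℂ) by push_cast; ring]
    exact_mod_cast h0.ne'
  have hc1 := c1ne a ha n
  have hc2 := c2ne a ha n
  have hcc : ((a:ℂ) - Real.pi * Complex.I * n) * (-(a:ℂ) - Real.pi * Complex.I * n)
      = -((a:ℂ)^2 + (Real.pi:ℂ)^2*(n:ℂ)^2) := by
    linear_combination ((Real.pi:ℂ)^2*(n:ℂ)^2) * Complex.I_sq
  have hu : Complex.exp (a:ℂ) ≠ 0 := Complex.exp_ne_zero _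
  rw [e1, e2, Complex.real_smul, Complex.exp_neg, mul_comm (Real.pi : ℂ) Complex.I] at *
  rw [div_mul_eq_mul_div, div_mul_eq_mul_div, div_add_div _ _ hc1 hc2, hcc]
  push_cast
  rw [Complex.sinh, Complex.exp_neg]
  rw [mul_zero, mul_zero, Complex.exp_zero, ← mul_div_assoc,
    div_eq_div_iff (neg_ne_zero.mpr hden) hden]
  field_simp
  have huu : Complex.exp (a:ℂ) ^ 3 * (Complex.exp (a:ℂ))⁻¹ ^ 3 = 1 := by
    rw [← mul_pow, mul_inv_cancel₀ hu, one_pow]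
  linear_combination (0:ℂ) * huu

lemma summable_aux (c : ℝ) (g : ℤ → ℝ) (hg : ∀ n : ℤ, n ≠ 0 → |g n| ≤ c / (n:ℝ)^2) :
    Summable g := by
  apply Summable.of_norm_bounded_eventually (g := fun n : ℤ => c * (1 / (n:ℝ)^2))
  · exact (summable_one_div_int_pow.mpr one_lt_two).mul_left c
  · have : {n : ℤ | ¬ ‖g n‖ ≤ c * (1/(n:ℝ)^2)} ⊆ {0} := by
      intro n hn
      simp only [Set.mem_setOf_eq] at hn
      by_contra h0
      exact hn (by simpa [div_eq_mul_inv, mul_one_div] using hg n (by simpa using h0))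
    exact Set.Finite.subset (Set.finite_singleton 0) this

lemma sq_int_ge_one {n : ℤ} (hn : n ≠ 0) : (1:ℝ) ≤ (n:ℝ)^2 := by
  have : (1:ℝ) ≤ |(n:ℝ)| := by exact_mod_cast Int.one_le_abs (by exact_mod_cast hn)
  nlinarith [abs_nonneg (n:ℝ), _root_.sq_abs (n:ℝ)]

lemma pi_sq_ge_one : (1:ℝ) ≤ Real.pi^2 := by nlinarith [Real.pi_gt_three]

lemma den_ge (a : ℝ) (n : ℤ) : (n:ℝ)^2 ≤ a^2 + Real.pi^2 * n^2 := by
  nlinarith [sq_nonneg a, sq_nonneg (n:ℝ), mul_nonneg (by nlinarith [pi_sq_ge_one] : (0:ℝ) ≤ Real.pi^2 - 1) (sq_nonneg (n:ℝ))]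

lemma bound_template (c a : ℝ) (n : ℤ) (hn : n ≠ 0) (hc : 0 ≤ c) :
    |c / (a^2 + Real.pi^2 * n^2)| ≤ c / (n:ℝ)^2 := by
  have h1 := sq_int_ge_one hn
  have h2 := den_ge a n
  have hpos : (0:ℝ) < a^2 + Real.pi^2 * n^2 := by nlinarith
  rw [abs_div, _root_.abs_of_nonneg hc, _root_.abs_of_nonneg hpos.le]
  exact div_le_div_of_nonneg_left hc (by nlinarith) h2

lemma summable_even (a : ℝ) : Summable (fun n : ℤ => Real.sinh a * a / (a^2 + Real.pi^2 * n^2)) := by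
  apply summable_aux |Real.sinh a * a|
  intro n hn
  calc |Real.sinh a * a / (a^2 + Real.pi^2 * n^2)|
      = |(|Real.sinh a * a|) / (a^2 + Real.pi^2 * n^2)| := by rw [_root_.abs_div, _root_.abs_div, _root_.abs_abs]
    _ ≤ |Real.sinh a * a| / (n:ℝ)^2 := bound_template _ a n hn (abs_nonneg _)

lemma pos_den_odd (a : ℝ) (n : ℤ) : (0:ℝ) < a^2 + Real.pi^2 * (2*(n:ℝ)+1)^2 := by
  have h1 : (1:ℝ) ≤ (2*(n:ℝ)+1)^2 := by
    rcases le_or_gt 0 n with h|h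
    · have : (0:ℝ) ≤ (n:ℝ) := by exact_mod_cast h
      nlinarith
    · have h' : n ≤ -1 := by omega
      have : (n:ℝ) ≤ -1 := by exact_mod_cast h'
      nlinarith
  nlinarith [sq_nonneg a, pi_sq_ge_one]

lemma summable_odd (a : ℝ) : Summable (fun n : ℤ => 1 / (a^2 + Real.pi^2 * (2*(n:ℝ)+1)^2)) := by
  apply summable_aux 1
  intro n hn
  have h1 := sq_int_ge_one hn
  have h2 : (n:ℝ)^2 ≤ (2*(n:ℝ)+1)^2 := by
    rcases le_or_gt 0 n with h|h
    · have : (0:ℝ) ≤ (n:ℝ) := by exact_mod_cast h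
      nlinarith
    · have h' : n ≤ -1 := by omega
      have : (n:ℝ) ≤ -1 := by exact_mod_cast h'
      nlinarith
  have h3 : (n:ℝ)^2 ≤ a^2 + Real.pi^2 * (2*(n:ℝ)+1)^2 := by
    nlinarith [sq_nonneg a, mul_nonneg (by nlinarith [pi_sq_ge_one] : (0:ℝ) ≤ Real.pi^2 - 1) (sq_nonneg (2*(n:ℝ)+1))]
  have hpos := pos_den_odd a n
  rw [_root_.abs_div, _root_.abs_of_nonneg (zero_le_one), _root_.abs_of_nonneg hpos.le]
  exact div_le_div_of_nonneg_left zero_le_one (by nlinarith) h3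

lemma sinh_ne_zero' {a : ℝ} (ha : a ≠ 0) : Real.sinh a ≠ 0 := by
  intro h
  exact ha (Real.sinh_injective (by rw [h, Real.sinh_zero]))

lemma val_id (a : ℝ) (ha : a ≠ 0) :
    (Real.cosh a - 1) / (Real.sinh a * a * 2) = Real.tanh (a/2) / (2*a) := by
  have e1 : Real.cosh a = Real.cosh (a/2)^2 + Real.sinh (a/2)^2 := by
    have := Real.cosh_two_mul (a/2); rwa [show 2*(a/2) = a by ring] at this
  have e2 : Real.sinh a = 2*Real.sinh (a/2)*Real.cosh (a/2) := by
    have := Real.sinh_two_mul (a/2); rwa [show 2*(a/2) = a by ring] at this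
  have e3 : Real.cosh (a/2)^2 - Real.sinh (a/2)^2 = 1 := Real.cosh_sq_sub_sinh_sq (a/2)
  have hc : Real.cosh (a/2) ≠ 0 := (Real.cosh_pos (a/2)).ne'
  have hs : Real.sinh (a/2) ≠ 0 := sinh_ne_zero' (by intro h; exact ha (by linarith))
  rw [Real.tanh_eq_sinh_div_cosh, e1, e2, div_div,
    div_eq_div_iff (by simp [mul_ne_zero, hs, hc, ha] : 2*Real.sinh (a/2)*Real.cosh (a/2) * a * 2 ≠ 0)
      (by simp [hc, ha] : Real.cosh (a/2) * (2*a) ≠ 0)]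
  linear_combination (2*a*Real.cosh (a/2)) * e3

lemma hasSum_master (a : ℝ) (ha : a ≠ 0) :
    HasSum (fun n : ℤ => 1 / (a^2 + Real.pi^2 * (2*(n:ℝ)+1)^2)) (Real.tanh (a/2) / (2*a)) := by
  haveI : Fact ((0:ℝ) < 2) := ⟨by norm_num⟩
  set F : C(AddCircle (2:ℝ), ℂ) := ⟨coshCirc a, by
    apply AddCircle.liftIco_zero_continuous
    · norm_num [Complex.cosh_neg]
    · fun_prop⟩ with hF
  have hcoeff : ∀ n : ℤ, fourierCoeff (⇑F) n
      = ((Real.sinh a * a / (a^2 + Real.pi^2 * n^2) : ℝ) : ℂ) := fun n =>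
    fourierCoeff_coshCirc a ha n
  have hsum : Summable (fourierCoeff (⇑F)) := by
    rw [show fourierCoeff (⇑F) = fun n : ℤ =>
        ((Real.sinh a * a / (a^2 + Real.pi^2 * n^2) : ℝ) : ℂ) from funext hcoeff]
    exact Complex.summable_ofReal.mpr (summable_even a)
  -- sum at x = 0
  have h0 : HasSum (fun n : ℤ => Real.sinh a * a / (a^2 + Real.pi^2 * n^2)) (Real.cosh a) := by
    have h := has_pointwise_sum_fourier_series_of_summable hsum (((0:ℝ) : AddCircle (2:ℝ)))
    rw [show F (((0:ℝ) : AddCircle (2:ℝ))) = ((Real.cosh a : ℝ) : ℂ) by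
      show coshCirc a _ = _
      rw [coshCirc_apply a (by norm_num : (0:ℝ) ∈ Set.Ico (0:ℝ) 2)]
      push_cast
      rw [show (a:ℂ) * (0 - 1) = -(a:ℂ) by ring, Complex.cosh_neg]] at h
    apply Complex.hasSum_ofReal.mp
    have heq : (fun n : ℤ => fourierCoeff (⇑F) n • fourier n (((0:ℝ) : AddCircle (2:ℝ))))
        = fun n : ℤ => ((Real.sinh a * a / (a^2 + Real.pi^2 * n^2) : ℝ) : ℂ) := by
      funext n
      rw [hcoeff n, smul_eq_mul, fourier_coe_apply]
      push_cast
      simp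
    rwa [heq] at h
  -- sum at x = 1
  have h1 : HasSum (fun n : ℤ => Real.sinh a * a / (a^2 + Real.pi^2 * n^2) * (-1:ℝ)^n) 1 := by
    have h := has_pointwise_sum_fourier_series_of_summable hsum (((1:ℝ) : AddCircle (2:ℝ)))
    rw [show F (((1:ℝ) : AddCircle (2:ℝ))) = ((1:ℝ) : ℂ) by
      show coshCirc a _ = _
      rw [coshCirc_apply a (by norm_num : (1:ℝ) ∈ Set.Ico (0:ℝ) 2)]
      norm_num] at h
    apply Complex.hasSum_ofReal.mp
    have heq : (fun n : ℤ => fourierCoeff (⇑F) n • fourier n (((1:ℝ) : AddCircle (2:ℝ))))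
        = fun n : ℤ => ((Real.sinh a * a / (a^2 + Real.pi^2 * n^2) * (-1:ℝ)^n : ℝ) : ℂ) := by
      funext n
      rw [hcoeff n, smul_eq_mul, fourier_coe_apply]
      rw [show 2 * (Real.pi:ℂ) * Complex.I * (n:ℂ) * ((1:ℝ):ℂ) / ((2:ℝ):ℂ)
          = (n:ℂ) * ((Real.pi:ℂ) * Complex.I) by push_cast; ring,
        Complex.exp_int_mul, Complex.exp_pi_mul_I]
      push_cast
      ring
    rwa [heq] at h
  have hdiff := h0.sub h1
  have hodd : HasSum ((fun n : ℤ => Real.sinh a * a / (a^2 + Real.pi^2 * n^2)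
      - Real.sinh a * a / (a^2 + Real.pi^2 * n^2) * (-1:ℝ)^n) ∘ (fun m : ℤ => 2*m+1))
      (Real.cosh a - 1) := by
    apply (Function.Injective.hasSum_iff (by intro x y hxy; dsimp only at hxy; omega) ?_).mpr hdiff
    intro x hx
    rcases Int.even_or_odd x with he | ho
    · rw [Even.neg_one_zpow he]; ring
    · exact absurd (by obtain ⟨m, hm⟩ := ho; exact ⟨m, by dsimp only; omega⟩
        : x ∈ Set.range (fun m : ℤ => 2*m+1)) hx
  have hodd' : HasSum (fun m : ℤ => Real.sinh a * a * 2 * (1 / (a^2 + Real.pi^2 * (2*(m:ℝ)+1)^2)))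
      (Real.cosh a - 1) := by
    have heq : (fun m : ℤ => Real.sinh a * a * 2 * (1 / (a^2 + Real.pi^2 * (2*(m:ℝ)+1)^2)))
        = (fun n : ℤ => Real.sinh a * a / (a^2 + Real.pi^2 * n^2)
          - Real.sinh a * a / (a^2 + Real.pi^2 * n^2) * (-1:ℝ)^n) ∘ (fun m : ℤ => 2*m+1) := by
      funext m
      show _ = Real.sinh a * a / (a^2 + Real.pi^2 * ((2*m+1 : ℤ):ℝ)^2)
        - Real.sinh a * a / (a^2 + Real.pi^2 * ((2*m+1 : ℤ):ℝ)^2) * (-1:ℝ)^(2*m+1 : ℤ)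
      rw [Odd.neg_one_zpow ⟨m, by ring⟩]
      push_cast
      ring
    rwa [heq]
  have hD : Real.sinh a * a * 2 ≠ 0 := by
    simp [sinh_ne_zero' ha, ha]
  have final := hodd'.div_const (Real.sinh a * a * 2)
  rw [val_id a ha] at final
  have heq2 : (fun m : ℤ => Real.sinh a * a * 2 * (1 / (a^2 + Real.pi^2 * (2*(m:ℝ)+1)^2))
      / (Real.sinh a * a * 2)) = fun m : ℤ => 1 / (a^2 + Real.pi^2 * (2*(m:ℝ)+1)^2) := by
    funext m
    rw [mul_comm, mul_div_assoc, div_self hD, mul_one]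
  rwa [heq2] at final

lemma summable_auxC (c : ℝ) (g : ℤ → ℂ) (hg : ∀ n : ℤ, n ≠ 0 → ‖g n‖ ≤ c / (n:ℝ)^2) :
    Summable g := by
  apply Summable.of_norm_bounded_eventually (g := fun n : ℤ => c * (1 / (n:ℝ)^2))
  · exact (summable_one_div_int_pow.mpr one_lt_two).mul_left c
  · have : {n : ℤ | ¬ ‖g n‖ ≤ c * (1/(n:ℝ)^2)} ⊆ {0} := by
      intro n hn
      simp only [Set.mem_setOf_eq] at hn
      by_contra h0
      exact hn (by simpa [div_eq_mul_inv, mul_one_div] using hg n (by simpa using h0))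
    exact Set.Finite.subset (Set.finite_singleton 0) this

lemma sq_le_odd (n : ℤ) : (n:ℝ)^2 ≤ (2*(n:ℝ)+1)^2 := by
  rcases le_or_gt 0 n with h|h
  · have : (0:ℝ) ≤ (n:ℝ) := by exact_mod_cast h
    nlinarith
  · have h' : n ≤ -1 := by omega
    have : (n:ℝ) ≤ -1 := by exact_mod_cast h'
    nlinarith

lemma odd_ne_zero (n : ℤ) : (2*(n:ℝ)+1) ≠ 0 := by
  intro hc
  have : (2*n+1 : ℤ) = 0 := by exact_mod_cast (by push_cast; linarith : ((2*n+1 : ℤ):ℝ) = 0)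
  omega

lemma z1ne (E w : ℝ) (hw : w ≠ 0) : Complex.I * (w:ℂ) - (E:ℂ) ≠ 0 := by
  intro hc
  have := congrArg Complex.im hc
  simp at this
  exact hw this

lemma z2ne (E' w : ℝ) (hw : w ≠ 0) : Complex.I * (w:ℂ) + (E':ℂ) ≠ 0 := by
  intro hc
  have := congrArg Complex.im hc
  simp at this
  exact hw this

lemma pair_id (E E' w : ℝ) (hw : w ≠ 0) (hEE : E + E' ≠ 0) :
    ((Complex.I * (w:ℂ) - (E:ℂ)) * (Complex.I * (w:ℂ) + (E':ℂ)))⁻¹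
      + ((Complex.I * (-(w:ℂ)) - (E:ℂ)) * (Complex.I * (-(w:ℂ)) + (E':ℂ)))⁻¹
    = ((-(2/(E+E')) * (E/(E^2+w^2) + E'/(E'^2+w^2)) : ℝ) : ℂ) := by
  have hw' : -w ≠ 0 := neg_ne_zero.mpr hw
  have h1 := z1ne E w hw
  have h2 := z2ne E' w hw
  have h3 : Complex.I * (-(w:ℂ)) - (E:ℂ) ≠ 0 := by
    have := z1ne E (-w) hw'; rwa [Complex.ofReal_neg] at this
  have h4 : Complex.I * (-(w:ℂ)) + (E':ℂ) ≠ 0 := by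
    have := z2ne E' (-w) hw'; rwa [Complex.ofReal_neg] at this
  have hX : ((E:ℂ)^2 + (w:ℂ)^2) ≠ 0 := by
    rw [show ((E:ℂ)^2 + (w:ℂ)^2) = (((E^2 + w^2 : ℝ)) : ℂ) by push_cast; ring]
    exact_mod_cast (by positivity : (0:ℝ) < E^2 + w^2).ne'
  have hY : ((E':ℂ)^2 + (w:ℂ)^2) ≠ 0 := by
    rw [show ((E':ℂ)^2 + (w:ℂ)^2) = (((E'^2 + w^2 : ℝ)) : ℂ) by push_cast; ring]
    exact_mod_cast (by positivity : (0:ℝ) < E'^2 + w^2).ne'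
  have hEEc : (E:ℂ) + (E':ℂ) ≠ 0 := by
    rw [show (E:ℂ) + (E':ℂ) = ((E + E' : ℝ) : ℂ) by push_cast; ring]
    exact_mod_cast hEE
  rw [inv_add_inv (mul_ne_zero h1 h2) (mul_ne_zero h3 h4)]
  have hN : (Complex.I * (w:ℂ) - (E:ℂ)) * (Complex.I * (w:ℂ) + (E':ℂ))
      + (Complex.I * (-(w:ℂ)) - (E:ℂ)) * (Complex.I * (-(w:ℂ)) + (E':ℂ))
      = -2 * ((w:ℂ)^2 + (E:ℂ)*(E':ℂ)) := by
    linear_combination (2*(w:ℂ)^2) * Complex.I_sq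
  have hD : (Complex.I * (w:ℂ) - (E:ℂ)) * (Complex.I * (w:ℂ) + (E':ℂ))
      * ((Complex.I * (-(w:ℂ)) - (E:ℂ)) * (Complex.I * (-(w:ℂ)) + (E':ℂ)))
      = ((E:ℂ)^2 + (w:ℂ)^2) * ((E':ℂ)^2 + (w:ℂ)^2) := by
    linear_combination ((Complex.I*(w:ℂ))^2 - (w:ℂ)^2 - (E:ℂ)^2 - (E':ℂ)^2) * (w:ℂ)^2 * Complex.I_sq
  rw [hN, hD]
  push_cast
  rw [div_eq_iff (mul_ne_zero hX hY)]
  field_simp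
  ring

lemma sum_lorentz (β : ℝ) (hβ : 0 < β) (E : ℝ) :
    HasSum (fun n : ℤ => E / (E^2 + (Real.pi*(2*(n:ℝ)+1)/β)^2)) (β * Real.tanh (β*E/2) / 2) := by
  rcases eq_or_ne E 0 with rfl | hE
  · simp only [zero_div, Real.tanh_zero, mul_zero, zero_mul]
    exact hasSum_zero
  · have h := (hasSum_master (β*E) (mul_ne_zero hβ.ne' hE)).mul_right (β^2*E)
    have heq : (fun n : ℤ => 1 / ((β*E)^2 + Real.pi^2 * (2*(n:ℝ)+1)^2) * (β^2*E))
        = fun n : ℤ => E / (E^2 + (Real.pi*(2*(n:ℝ)+1)/β)^2) := by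
      funext n
      have hd1 := pos_den_odd (β*E) n
      have hd2 : (0:ℝ) < E^2 + (Real.pi*(2*(n:ℝ)+1)/β)^2 := by
        have := odd_ne_zero n
        positivity
      rw [div_mul_eq_mul_div, one_mul, div_eq_div_iff hd1.ne' hd2.ne']
      field_simp
    have hval : Real.tanh ((β*E)/2) / (2*(β*E)) * (β^2*E) = β * Real.tanh (β*E/2) / 2 := by
      field_simp
    rw [heq, hval] at h
    exact h

/-- For `β > 0` and `E, E' ∈ ℝ` with `E + E' ≠ 0`, the series
`Σ_{n∈ℤ} [(iω_n - E)(iω_n + E')]⁻¹` (with `ω_n = π(2n+1)/β`) converges absolutely and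
`-(2/β) Σ_{n∈ℤ} 1/((iω_n - E)(iω_n + E')) = (tanh(βE/2) + tanh(βE'/2))/(E + E')`. -/
theorem stmt_12 (β : ℝ) (hβ : 0 < β) (E E' : ℝ) (h : E + E' ≠ 0) :
    Summable (fun n : ℤ =>
      ((Complex.I * ((Real.pi * (2 * (n : ℝ) + 1) / β : ℝ) : ℂ) - (E : ℂ)) *
        (Complex.I * ((Real.pi * (2 * (n : ℝ) + 1) / β : ℝ) : ℂ) + (E' : ℂ)))⁻¹) ∧
    -(2 / (β : ℂ)) * ∑' n : ℤ,
        ((Complex.I * ((Real.pi * (2 * (n : ℝ) + 1) / β : ℝ) : ℂ) - (E : ℂ)) *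
          (Complex.I * ((Real.pi * (2 * (n : ℝ) + 1) / β : ℝ) : ℂ) + (E' : ℂ)))⁻¹
      = (((Real.tanh (β * E / 2) + Real.tanh (β * E' / 2)) / (E + E') : ℝ) : ℂ) := by
  set f : ℤ → ℂ := fun n : ℤ =>
      ((Complex.I * ((Real.pi * (2 * (n : ℝ) + 1) / β : ℝ) : ℂ) - (E : ℂ)) *
        (Complex.I * ((Real.pi * (2 * (n : ℝ) + 1) / β : ℝ) : ℂ) + (E' : ℂ)))⁻¹ with hf
  have hwne : ∀ n : ℤ, Real.pi * (2*(n:ℝ)+1)/β ≠ 0 := fun n =>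
    div_ne_zero (mul_ne_zero Real.pi_ne_zero (odd_ne_zero n)) hβ.ne'
  have hsum : Summable f := by
    apply summable_auxC (β^2)
    intro n hn
    set wn := Real.pi * (2*(n:ℝ)+1)/β with hwn
    have h1 : |wn| ≤ ‖Complex.I * (wn:ℂ) - (E:ℂ)‖ := by
      have := Complex.abs_im_le_norm (Complex.I * (wn:ℂ) - (E:ℂ))
      simpa using this
    have h2 : |wn| ≤ ‖Complex.I * (wn:ℂ) + (E':ℂ)‖ := by
      have := Complex.abs_im_le_norm (Complex.I * (wn:ℂ) + (E':ℂ))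
      simpa using this
    have hnf : ‖f n‖ = (‖Complex.I * (wn:ℂ) - (E:ℂ)‖ * ‖Complex.I * (wn:ℂ) + (E':ℂ)‖)⁻¹ := by
      rw [hf, norm_inv, norm_mul]
    have hprod : wn^2 ≤ ‖Complex.I * (wn:ℂ) - (E:ℂ)‖ * ‖Complex.I * (wn:ℂ) + (E':ℂ)‖ := by
      have := mul_le_mul h1 h2 (abs_nonneg _) (norm_nonneg _)
      calc wn^2 = |wn| * |wn| := by rw [← _root_.sq_abs, sq]
        _ ≤ _ := this
    have hn2 : (0:ℝ) < (n:ℝ)^2 := by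
      have := sq_int_ge_one hn; linarith
    have hlow : (n:ℝ)^2/β^2 ≤ wn^2 := by
      rw [hwn, div_pow, mul_pow]
      apply div_le_div_of_nonneg_right ?_ (by positivity)
      nlinarith [pi_sq_ge_one, sq_le_odd n, sq_nonneg (2*(n:ℝ)+1)]
    have hwpos : 0 < wn^2 := by
      have := hwne n; positivity
    calc ‖f n‖ = (‖Complex.I * (wn:ℂ) - (E:ℂ)‖ * ‖Complex.I * (wn:ℂ) + (E':ℂ)‖)⁻¹ := hnf
      _ ≤ (wn^2)⁻¹ := by
          apply inv_anti₀ hwpos hprod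
      _ ≤ ((n:ℝ)^2/β^2)⁻¹ := by
          apply inv_anti₀ (by positivity) hlow
      _ = β^2 / (n:ℝ)^2 := by rw [inv_div]
  refine ⟨hsum, ?_⟩
  have hfs := hsum.hasSum
  have h2 := ((Equiv.subLeft (-1:ℤ)).hasSum_iff).mpr hfs
  have hadd := hfs.add h2
  have hr := ((sum_lorentz β hβ E).add (sum_lorentz β hβ E')).mul_left (-(2/(E+E')))
  have hC := Complex.hasSum_ofReal.mpr hr
  have heq : (fun n : ℤ => f n + (f ∘ (Equiv.subLeft (-1:ℤ))) n)
      = fun n : ℤ => ((-(2/(E+E')) * (E / (E^2 + (Real.pi*(2*(n:ℝ)+1)/β)^2)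
        + E' / (E'^2 + (Real.pi*(2*(n:ℝ)+1)/β)^2)) : ℝ) : ℂ) := by
    funext n
    have he : (Equiv.subLeft (-1:ℤ)) n = -1 - n := rfl
    show f n + f ((Equiv.subLeft (-1:ℤ)) n) = _
    rw [he, hf]
    have harg : (Real.pi * (2 * ((-1 - n : ℤ) : ℝ) + 1) / β : ℝ)
        = -(Real.pi * (2*(n:ℝ)+1)/β) := by push_cast; ring
    simp only [harg, Complex.ofReal_neg]
    exact pair_id E E' (Real.pi * (2*(n:ℝ)+1)/β) (hwne n) h
  rw [heq] at hadd
  have hST := hadd.unique hC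
  have hβc : (β:ℂ) ≠ 0 := by exact_mod_cast hβ.ne'
  have hreal : -((-(2/(E+E')) * (β * Real.tanh (β*E/2) / 2 + β * Real.tanh (β*E'/2) / 2)) / β)
      = (Real.tanh (β * E / 2) + Real.tanh (β * E' / 2)) / (E + E') := by
    field_simp
  rw [← hreal, Complex.ofReal_neg, Complex.ofReal_div, ← hST]
  field_simp
  ring
end

section
/- For all temperatures 0 < T_0 ≤ T ≤ T_c and every E ∈ ℝ \ {0} one has the lower bound tanh(E/(2T))/E − tanh(E/(2T_c))/E ≥ ½ · ((T_c − T)/T_c²) · cosh^{−2}(E/(2T_0)). -/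
lemma my_hasDerivAt_tanh (x : ℝ) : HasDerivAt Real.tanh (1 / Real.cosh x ^ 2) x := by
  have h := (Real.hasDerivAt_sinh x).div (Real.hasDerivAt_cosh x) (Real.cosh_pos x).ne'
  have heq : (Real.cosh x * Real.cosh x - Real.sinh x * Real.sinh x) / Real.cosh x ^ 2
      = 1 / Real.cosh x ^ 2 := by
    congr 1
    have := Real.cosh_sq' x
    nlinarith [this]
  have : Real.tanh = fun x => Real.sinh x / Real.cosh x := by
    funext y; exact Real.tanh_eq_sinh_div_cosh y
  rw [this, ← heq]
  exact h

/-- Derivative of `S ↦ tanh (E/(2S)) / E + c * S` at `S ≠ 0`. -/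
lemma my_hasDerivAt_h (E c S : ℝ) (hS : S ≠ 0) (hE : E ≠ 0) :
    HasDerivAt (fun S : ℝ => Real.tanh (E / (2 * S)) / E + c * S)
      (-(1 / Real.cosh (E / (2 * S)) ^ 2) * (1 / (2 * S ^ 2)) + c) S := by
  have h1 : HasDerivAt (fun S : ℝ => 2 * S) 2 S := by
    simpa using (hasDerivAt_id S).const_mul 2
  have h2 : HasDerivAt (fun S : ℝ => E / (2 * S)) (E * (-2 / (2 * S) ^ 2)) S := by
    have := (h1.inv (by simp [hS])).const_mul E
    simpa [div_eq_mul_inv] using this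
  have h3 := (my_hasDerivAt_tanh (E / (2 * S))).comp S h2
  have h4 := (h3.div_const E).add ((hasDerivAt_id S).const_mul c)
  refine h4.congr_deriv ?_
  have hc := (Real.cosh_pos (E / (2 * S))).ne'
  field_simp

/-- For temperatures `0 < T₀ ≤ T ≤ T_c` and `E ≠ 0`:
`tanh(E/(2T))/E - tanh(E/(2T_c))/E ≥ ½ ((T_c - T)/T_c²) cosh⁻²(E/(2T₀))`. -/
theorem stmt_15 (E : ℝ) (hE : E ≠ 0) (T0 T Tc : ℝ)
    (hT0 : 0 < T0) (hT : T0 ≤ T) (hTc : T ≤ Tc) :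
    Real.tanh (E / (2 * T)) / E - Real.tanh (E / (2 * Tc)) / E
      ≥ (1 / 2) * ((Tc - T) / Tc ^ 2) * (1 / Real.cosh (E / (2 * T0)) ^ 2) := by
  have hTpos : 0 < T := lt_of_lt_of_le hT0 hT
  have hTcpos : 0 < Tc := lt_of_lt_of_le hTpos hTc
  set c : ℝ := (1 / 2) * (1 / Tc ^ 2) * (1 / Real.cosh (E / (2 * T0)) ^ 2) with hc
  set h : ℝ → ℝ := fun S => Real.tanh (E / (2 * S)) / E + c * S with hh
  have key : AntitoneOn h (Set.Icc T0 Tc) := by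
    apply antitoneOn_of_deriv_nonpos (convex_Icc _ _)
    · intro S hS
      have hSne : S ≠ 0 := (lt_of_lt_of_le hT0 hS.1).ne'
      exact ((my_hasDerivAt_h E c S hSne hE).continuousAt).continuousWithinAt
    · intro S hS
      rw [interior_Icc] at hS
      exact (my_hasDerivAt_h E c S (lt_of_lt_of_le hT0 hS.1.le).ne' hE).differentiableAt.differentiableWithinAt
    · intro S hS
      rw [interior_Icc] at hS
      have hSpos : 0 < S := lt_of_lt_of_le hT0 hS.1.le
      rw [(my_hasDerivAt_h E c S hSpos.ne' hE).deriv]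
      have hcoshS : Real.cosh (E / (2 * S)) ≤ Real.cosh (E / (2 * T0)) := by
        rw [Real.cosh_le_cosh]
        rw [abs_div, abs_div]
        apply div_le_div_of_nonneg_left (abs_nonneg E) (by positivity)
        rw [abs_of_pos (by positivity : (0:ℝ) < 2 * T0), abs_of_pos (by positivity : (0:ℝ) < 2 * S)]
        linarith [hS.1]
      have hcosh0 : 0 < Real.cosh (E / (2 * T0)) := Real.cosh_pos _
      have hcoshSpos : 0 < Real.cosh (E / (2 * S)) := Real.cosh_pos _
      rw [hc]
      have h1 : 1 / Real.cosh (E / (2 * T0)) ^ 2 ≤ 1 / Real.cosh (E / (2 * S)) ^ 2 := by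
        apply one_div_le_one_div_of_le (by positivity)
        exact pow_le_pow_left₀ hcoshSpos.le hcoshS 2
      have h2 : 1 / Tc ^ 2 ≤ 1 / S ^ 2 := by
        apply one_div_le_one_div_of_le (by positivity)
        exact pow_le_pow_left₀ hSpos.le (le_trans hS.2.le le_rfl) 2
      have hr : (1:ℝ) / (2 * S ^ 2) = (1 / S ^ 2) / 2 := by
        rw [one_div, one_div, mul_inv]; ring
      rw [hr]
      linarith [mul_le_mul h2 h1 (by positivity) (by positivity : (0:ℝ) ≤ 1 / S ^ 2)]
    done
  have hmono := key (Set.mem_Icc.2 ⟨hT, hTc⟩) (Set.mem_Icc.2 ⟨le_trans hT hTc, le_rfl⟩) hTc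
  simp only [hh] at hmono
  have : (1 / 2) * ((Tc - T) / Tc ^ 2) * (1 / Real.cosh (E / (2 * T0)) ^ 2) = c * (Tc - T) := by
    rw [hc]; ring
  rw [ge_iff_le, this]
  linarith [hmono]
end

section
/- For every μ ∈ ℝ, every a ∈ ℕ₀, and every T_0 > 0 there is a constant C > 0 such that for all T ≥ T_0 the function F_T^a := 2T Σ_{n∈ℤ} Σ_{b=0}^a binom(a,b) (|·|^b |g_0^{iω_n}|) * (|·|^{a−b} |g_0^{−iω_n}|) (a sum of convolutions on ℝ³, with ω_n := π(2n+1)T) satisfies ‖F_T^a‖_{L¹(ℝ³)} ≤ C; in particular the defining series converges in L¹(ℝ³). -/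
open MeasureTheory

/-- The weighted convolution `(|·|^b |g_0^w|) * (|·|^c |g_0^{w'}|)` evaluated at `x`. -/
noncomputable def wconv (μ : ℝ) (b c : ℕ) (w w' : ℂ) (x : EuclideanSpace ℝ (Fin 3)) : ℝ :=
  ∫ y : EuclideanSpace ℝ (Fin 3),
    ‖y‖ ^ b * ‖g0 μ w y‖ * (‖x - y‖ ^ c * ‖g0 μ w' (x - y)‖)

/-- The `n`-th summand of `F_T^a`, i.e.
`Σ_{b=0}^a binom(a,b) (|·|^b |g_0^{iω_n}|) * (|·|^{a-b} |g_0^{-iω_n}|)` with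
`ω_n = π(2n+1)T`. -/
noncomputable def FTa_term (μ : ℝ) (a : ℕ) (T : ℝ) (n : ℤ) (x : EuclideanSpace ℝ (Fin 3)) : ℝ :=
  ∑ b ∈ Finset.range (a + 1), (a.choose b : ℝ) *
    wconv μ b (a - b) (Complex.I * ((Real.pi * (2 * (n : ℝ) + 1) * T : ℝ) : ℂ))
      (-(Complex.I * ((Real.pi * (2 * (n : ℝ) + 1) * T : ℝ) : ℂ))) x


section Aux
set_option maxHeartbeats 1000000
open MeasureTheory Measure Set
open scoped Convolution

local notation "E3" => EuclideanSpace ℝ (Fin 3)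

noncomputable def Fb (d : ℝ) (b : ℕ) (x : E3) : ℝ :=
  ‖x‖ ^ b * ((4 * Real.pi * ‖x‖)⁻¹ * Real.exp (-(d * ‖x‖)))

lemma my_lpolar (g : ℝ → ENNReal) (hg : Measurable g) :
    ∫⁻ x : E3, g ‖x‖ = (volume : Measure E3).toSphere Set.univ *
      ∫⁻ y in Set.Ioi (0:ℝ), ENNReal.ofReal (y ^ 2) * g y := by
  have hdim : Module.finrank ℝ E3 = 3 := finrank_euclideanSpace_fin
  calc ∫⁻ x : E3, g ‖x‖
      = ∫⁻ x in ({0}ᶜ : Set E3), g ‖x‖ := by rw [restrict_compl_singleton]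
    _ = ∫⁻ x : (({0}ᶜ : Set E3)), g ‖(x : E3)‖ ∂(volume.comap Subtype.val) :=
        (lintegral_subtype_comap (measurableSet_singleton 0).compl _).symm
    _ = ∫⁻ p : (Metric.sphere (0:E3) 1) × (Set.Ioi (0:ℝ)), g p.2
          ∂(((volume : Measure E3)).toSphere.prod
            (Measure.volumeIoiPow (Module.finrank ℝ E3 - 1))) :=
        by simpa only [homeomorphUnitSphereProd_apply_snd_coe] using
          (volume : Measure E3).measurePreserving_homeomorphUnitSphereProd.lintegral_comp_emb
            (Homeomorph.measurableEmbedding _) (fun p => g p.2)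
    _ = (volume : Measure E3).toSphere Set.univ *
          ∫⁻ y in Set.Ioi (0:ℝ), ENNReal.ofReal (y ^ 2) * g y := by
        rw [lintegral_prod _ (by
          exact ((hg.comp (measurable_subtype_coe.comp measurable_snd))).aemeasurable)]
        simp only [lintegral_const]
        rw [hdim, mul_comm]
        congr 1
        show ∫⁻ q : (Set.Ioi (0:ℝ)), g q ∂(Measure.volumeIoiPow 2) = _
        rw [Measure.volumeIoiPow,
          lintegral_withDensity_eq_lintegral_mul _
            (by exact (measurable_subtype_coe.pow_const 2).ennreal_ofReal)
            (show Measurable fun q : (Set.Ioi (0:ℝ)) => g q from hg.comp measurable_subtype_coe),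
          ← lintegral_subtype_comap measurableSet_Ioi
            (fun y : ℝ => ENNReal.ofReal (y ^ 2) * g y)]
        rfl

lemma hb_meas (d : ℝ) (b : ℕ) :
    Measurable (fun s : ℝ => s ^ b * ((4 * Real.pi * s)⁻¹ * Real.exp (-(d * s)))) := by
  fun_prop

lemma intOn_pow_exp {d : ℝ} (hd : 0 < d) (k : ℕ) :
    IntegrableOn (fun y : ℝ => y ^ k * Real.exp (-(d * y))) (Set.Ioi 0) := by
  have h1 : IntegrableOn (fun y : ℝ => y ^ ((k:ℕ):ℝ) * Real.exp (-d * y ^ (1:ℝ)))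
      (Set.Ioi 0) := integrableOn_rpow_mul_exp_neg_mul_rpow (by
        have : (0:ℝ) ≤ k := Nat.cast_nonneg k
        linarith) one_pos hd
  refine h1.congr_fun (fun y hy => ?_) measurableSet_Ioi
  beta_reduce
  rw [Real.rpow_one, Real.rpow_natCast]
  ring_nf

lemma integral_pow_exp {d : ℝ} (hd : 0 < d) (k : ℕ) :
    ∫ y in Set.Ioi (0:ℝ), y ^ k * Real.exp (-(d * y)) = (Nat.factorial k : ℝ) * (1/d) ^ (k+1) := by
  have := Real.integral_rpow_mul_exp_neg_mul_Ioi
    (a := ((k:ℕ):ℝ) + 1) (r := d) (by positivity) hd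
  rw [show (((k:ℕ):ℝ) + 1 - 1) = ((k:ℕ):ℝ) by ring] at this
  have heq : ∫ t in Set.Ioi (0:ℝ), t ^ ((k:ℕ):ℝ) * Real.exp (-(d * t))
      = ∫ y in Set.Ioi (0:ℝ), y ^ k * Real.exp (-(d * y)) := by
    refine setIntegral_congr_fun measurableSet_Ioi (fun y hy => ?_)
    rw [Real.rpow_natCast]
  have hg : Real.Gamma ((k:ℝ)+1) = (Nat.factorial k : ℝ) := Real.Gamma_nat_eq_factorial k
  have hr : (1/d : ℝ) ^ (((k:ℕ):ℝ)+1) = (1/d)^(k+1) := by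
    rw [show (((k:ℕ):ℝ)+1) = ((k+1:ℕ):ℝ) by push_cast; ring, Real.rpow_natCast]
  rw [hr, hg] at this
  rw [← heq, this]
  ring

lemma Fb_nonneg (d : ℝ) (b : ℕ) (x : E3) : 0 ≤ Fb d b x := by
  unfold Fb
  have := Real.pi_pos
  positivity

lemma sq_mul_Fb {d : ℝ} (b : ℕ) {y : ℝ} (hy : 0 < y) :
    y ^ 2 * (y ^ b * ((4 * Real.pi * y)⁻¹ * Real.exp (-(d * y))))
      = (4 * Real.pi)⁻¹ * (y ^ (b+1) * Real.exp (-(d * y))) := by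
  have hpi := Real.pi_ne_zero
  field_simp
  ring

lemma integrable_Fb {d : ℝ} (hd : 0 < d) (b : ℕ) : Integrable (Fb d b) := by
  have hmeas : AEStronglyMeasurable (Fb d b) volume :=
    ((hb_meas d b).comp measurable_norm).aestronglyMeasurable
  refine ⟨hmeas, ?_⟩
  rw [HasFiniteIntegral]
  have hnn : ∀ x : E3, (‖Fb d b x‖₊ : ENNReal) = ENNReal.ofReal (Fb d b x) := fun x =>
    Real.enorm_eq_ofReal (Fb_nonneg d b x)
  calc ∫⁻ x, (‖Fb d b x‖₊ : ENNReal)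
      = ∫⁻ x : E3, (fun s : ℝ => ENNReal.ofReal
          (s ^ b * ((4 * Real.pi * s)⁻¹ * Real.exp (-(d * s))))) ‖x‖ := by
        simp only [hnn]; rfl
    _ = (volume : Measure E3).toSphere Set.univ *
          ∫⁻ y in Set.Ioi (0:ℝ), ENNReal.ofReal (y ^ 2) *
            ENNReal.ofReal (y ^ b * ((4 * Real.pi * y)⁻¹ * Real.exp (-(d * y)))) :=
        my_lpolar _ ((hb_meas d b).ennreal_ofReal)
    _ < ⊤ := by
        refine ENNReal.mul_lt_top (measure_lt_top _ _) ?_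
        have hbd : ∫⁻ y in Set.Ioi (0:ℝ), ENNReal.ofReal (y ^ 2) *
            ENNReal.ofReal (y ^ b * ((4 * Real.pi * y)⁻¹ * Real.exp (-(d * y))))
            ≤ ∫⁻ y in Set.Ioi (0:ℝ),
              (‖(4 * Real.pi)⁻¹ * (y ^ (b+1) * Real.exp (-(d * y)))‖₊ : ENNReal) := by
          refine setLIntegral_mono (by fun_prop) (fun y hy => ?_)
          have hy' : (0:ℝ) < y := hy
          have hpi := Real.pi_pos
          rw [← ENNReal.ofReal_mul (by positivity), sq_mul_Fb b hy']
          exact le_of_eq (Real.enorm_eq_ofReal (by positivity)).symm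
        refine lt_of_le_of_lt hbd ?_
        exact ((intOn_pow_exp hd (b+1)).const_mul _).2

lemma integral_Fb {d : ℝ} (hd : 0 < d) (b : ℕ) :
    ∫ x : E3, Fb d b x = (3 * (volume (Metric.ball (0:E3) 1)).toReal * (4*Real.pi)⁻¹
      * (Nat.factorial (b+1))) * (1/d)^(b+2) := by
  have hdim : Module.finrank ℝ E3 = 3 := finrank_euclideanSpace_fin
  have h := integral_fun_norm_addHaar (volume : Measure E3)
    (fun s : ℝ => s ^ b * ((4 * Real.pi * s)⁻¹ * Real.exp (-(d * s))))
  rw [hdim] at h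
  have h2 : ∫ y in Set.Ioi (0:ℝ), y ^ (3-1) •
      (y ^ b * ((4 * Real.pi * y)⁻¹ * Real.exp (-(d * y))))
      = (4 * Real.pi)⁻¹ * ((Nat.factorial (b+1) : ℝ) * (1/d) ^ (b+2)) := by
    rw [show ∫ y in Set.Ioi (0:ℝ), y ^ (3-1) •
        (y ^ b * ((4 * Real.pi * y)⁻¹ * Real.exp (-(d * y))))
        = ∫ y in Set.Ioi (0:ℝ), (4 * Real.pi)⁻¹ * (y ^ (b+1) * Real.exp (-(d * y))) from
      setIntegral_congr_fun measurableSet_Ioi (fun y hy => by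
        rw [smul_eq_mul]; exact sq_mul_Fb b hy),
      integral_const_mul, integral_pow_exp hd (b+1)]
  show ∫ x : E3, (fun s : ℝ => s ^ b * ((4 * Real.pi * s)⁻¹ * Real.exp (-(d * s)))) ‖x‖ = _
  rw [h, h2, nsmul_eq_mul, smul_eq_mul, measureReal_def]
  push_cast
  ring

lemma sqrt_re_eq (ζ : ℂ) (hζ : ζ ≠ 0) :
    ((ζ ^ ((1:ℂ)/2)).re) = Real.sqrt (‖ζ‖) * Real.cos (ζ.arg / 2) := by
  rw [Complex.cpow_def_of_ne_zero hζ, Complex.exp_re]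
  have h1 : (Complex.log ζ * ((1:ℂ)/2)).re = Real.log (‖ζ‖) / 2 := by
    simp [Complex.mul_re, Complex.log_re, Complex.log_im]
    ring
  have h2 : (Complex.log ζ * ((1:ℂ)/2)).im = ζ.arg / 2 := by
    simp [Complex.mul_im, Complex.log_re, Complex.log_im]
    ring
  rw [h1, h2]
  congr 1
  rw [Real.sqrt_eq_rpow, Real.rpow_def_of_pos (norm_pos_iff.mpr hζ)]
  ring_nf

lemma sqrt_re_sq (ζ : ℂ) (hζ : ζ ≠ 0) :
    ((ζ ^ ((1:ℂ)/2)).re) ^ 2 = (‖ζ‖ + ζ.re) / 2 := by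
  rw [sqrt_re_eq ζ hζ, mul_pow,
    Real.sq_sqrt (norm_nonneg ζ),
    Real.cos_half (Complex.neg_pi_lt_arg ζ).le (Complex.arg_le_pi ζ),
    Real.sq_sqrt (by nlinarith [Real.neg_one_le_cos ζ.arg] : (0:ℝ) ≤ (1 + Real.cos ζ.arg)/2),
    Complex.cos_arg hζ]
  have habs : ‖ζ‖ ≠ 0 := norm_ne_zero_iff.mpr hζ
  field_simp

lemma sqrt_re_nonneg (ζ : ℂ) (hζ : ζ ≠ 0) : 0 ≤ ((ζ ^ ((1:ℂ)/2)).re) := by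
  rw [sqrt_re_eq ζ hζ]
  have hc : 0 ≤ Real.cos (ζ.arg / 2) := by
    refine Real.cos_nonneg_of_mem_Icc ⟨?_, ?_⟩
    · linarith [Complex.neg_pi_lt_arg ζ]
    · linarith [Complex.arg_le_pi ζ]
  positivity

lemma sqrt_re_lb (ζ : ℂ) (him : ζ.im ≠ 0) :
    |ζ.im| / (2 * Real.sqrt (‖ζ‖)) ≤ ((ζ ^ ((1:ℂ)/2)).re) := by
  have hζ : ζ ≠ 0 := fun h => him (by simp [h])
  have habs : 0 < ‖ζ‖ := norm_pos_iff.mpr hζ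
  have hsq := sqrt_re_sq ζ hζ
  have hnn := sqrt_re_nonneg ζ hζ
  have hre : |ζ.re| ≤ ‖ζ‖ := Complex.abs_re_le_norm ζ
  have hid : (‖ζ‖) ^ 2 = ζ.re ^ 2 + ζ.im ^ 2 := by
    rw [Complex.sq_norm, Complex.normSq_apply]; ring
  have hsqrt : 0 < Real.sqrt (‖ζ‖) := Real.sqrt_pos.mpr habs
  have key : ζ.im ^ 2 ≤ (2 * Real.sqrt (‖ζ‖) * ((ζ ^ ((1:ℂ)/2)).re)) ^ 2 := by
    nlinarith [Real.sq_sqrt habs.le, neg_abs_le ζ.re, sq_nonneg (‖ζ‖ + ζ.re)]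
  have key2 : |ζ.im| ≤ 2 * Real.sqrt (‖ζ‖) * ((ζ ^ ((1:ℂ)/2)).re) := by
    calc |ζ.im| = Real.sqrt (ζ.im ^ 2) := (Real.sqrt_sq_eq_abs _).symm
      _ ≤ Real.sqrt ((2 * Real.sqrt (‖ζ‖) * ((ζ ^ ((1:ℂ)/2)).re)) ^ 2) :=
          Real.sqrt_le_sqrt key
      _ = _ := Real.sqrt_sq (by positivity)
  rw [div_le_iff₀ (by positivity)]
  linarith [key2]

lemma abs_g0 (μ : ℝ) (w : ℂ) (x : E3) :
    ‖g0 μ w x‖ = (4 * Real.pi * ‖x‖)⁻¹ *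
      Real.exp (-((((-(w + (μ:ℂ)))) ^ ((1:ℂ)/2)).re * ‖x‖)) := by
  unfold g0
  rw [norm_mul, Complex.norm_real, Real.norm_eq_abs, Complex.norm_exp]
  have hpi := Real.pi_pos
  congr 1
  · rw [abs_neg, abs_of_nonneg (by positivity)]
  · congr 1
    simp [Complex.mul_re]

-- lower bound on the decay rate
lemma d_lb (μ : ℝ) {T0 ω : ℝ} (hT0 : 0 < T0) (hω : Real.pi * T0 ≤ |ω|)
    (ζ : ℂ) (hre : ζ.re = -μ) (him : |ζ.im| = |ω|) :
    (2 * Real.sqrt (|μ| / (Real.pi * T0) + 1))⁻¹ * Real.sqrt |ω| ≤ ((ζ ^ ((1:ℂ)/2)).re) := by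
  have hπ := Real.pi_pos
  have hωpos : (0:ℝ) < |ω| := lt_of_lt_of_le (by positivity) hω
  have him0 : ζ.im ≠ 0 := by
    intro h; rw [h] at him; simp at him; rw [← him] at hωpos; simp at hωpos
  have hζ : ζ ≠ 0 := fun h => him0 (by simp [h])
  have habs : 0 < ‖ζ‖ := norm_pos_iff.mpr hζ
  have h1 : |ω| / (2 * Real.sqrt (‖ζ‖)) ≤ ((ζ ^ ((1:ℂ)/2)).re) := by
    rw [← him]; exact sqrt_re_lb ζ him0
  set c : ℝ := |μ| / (Real.pi * T0) + 1 with hc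
  have hcpos : (0:ℝ) < c := by positivity
  have h2 : ‖ζ‖ ≤ c * |ω| := by
    refine le_trans (Complex.norm_le_abs_re_add_abs_im ζ) ?_
    rw [hre, him, abs_neg]
    have : |μ| ≤ |μ| / (Real.pi * T0) * |ω| := by
      rw [div_mul_eq_mul_div, le_div_iff₀ (by positivity)]
      exact mul_le_mul_of_nonneg_left hω (abs_nonneg μ)
    rw [hc]
    nlinarith
  have h4 : Real.sqrt (‖ζ‖) ≤ Real.sqrt c * Real.sqrt |ω| := by
    rw [← Real.sqrt_mul hcpos.le]
    exact Real.sqrt_le_sqrt h2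
  have hsζ : 0 < Real.sqrt (‖ζ‖) := Real.sqrt_pos.mpr habs
  have h5 : |ω| / (2 * (Real.sqrt c * Real.sqrt |ω|)) ≤ |ω| / (2 * Real.sqrt (‖ζ‖)) := by
    gcongr
  have hsc : 0 < Real.sqrt c := Real.sqrt_pos.mpr hcpos
  have hsω : 0 < Real.sqrt |ω| := Real.sqrt_pos.mpr hωpos
  have h6 : (2 * Real.sqrt c)⁻¹ * Real.sqrt |ω| = |ω| / (2 * (Real.sqrt c * Real.sqrt |ω|)) := by
    have := Real.mul_self_sqrt hωpos.le
    field_simp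
    nlinarith [this]
  rw [h6]
  exact le_trans h5 h1

noncomputable def dcoef (μ : ℝ) (w : ℂ) : ℝ := ((-(w + (μ:ℂ))) ^ ((1:ℂ)/2)).re


lemma wconv_eq_conv (μ : ℝ) (b c : ℕ) (w w' : ℂ) :
    (fun x : E3 => wconv μ b c w w' x)
      = (Fb (dcoef μ w) b) ⋆[ContinuousLinearMap.mul ℝ ℝ, volume] (Fb (dcoef μ w') c) := by
  funext x
  show (∫ y : E3, ‖y‖ ^ b * ‖g0 μ w y‖ *
      (‖x - y‖ ^ c * ‖g0 μ w' (x - y)‖)) = _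
  rw [convolution_def]
  refine integral_congr_ae (Filter.Eventually.of_forall fun y => ?_)
  simp only []
  rw [abs_g0, abs_g0]
  rfl

lemma wconv_integrable (μ : ℝ) {b c : ℕ} {w w' : ℂ}
    (hd : 0 < dcoef μ w) (hd' : 0 < dcoef μ w') :
    Integrable (fun x : E3 => wconv μ b c w w' x) := by
  rw [wconv_eq_conv]
  exact (integrable_Fb hd b).integrable_convolution (ContinuousLinearMap.mul ℝ ℝ)
    (integrable_Fb hd' c)

lemma wconv_integral (μ : ℝ) {b c : ℕ} {w w' : ℂ}
    (hd : 0 < dcoef μ w) (hd' : 0 < dcoef μ w') :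
    ∫ x : E3, wconv μ b c w w' x
      = (∫ x : E3, Fb (dcoef μ w) b x) * (∫ x : E3, Fb (dcoef μ w') c x) := by
  rw [wconv_eq_conv]
  rw [integral_convolution (ContinuousLinearMap.mul ℝ ℝ) (integrable_Fb hd b)
    (integrable_Fb hd' c)]
  rfl

end Aux

section Main
set_option maxHeartbeats 1000000
open MeasureTheory Measure Set
open scoped Convolution
local notation "E3" => EuclideanSpace ℝ (Fin 3)

/-- For every `μ ∈ ℝ`, `a ∈ ℕ₀` and `T₀ > 0` there is `C > 0` such that for all `T ≥ T₀`
the function `F_T^a = 2T Σ_{n∈ℤ} Σ_{b=0}^a binom(a,b) (|·|^b |g_0^{iω_n}|) * (|·|^{a-b} |g_0^{-iω_n}|)`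
satisfies `‖F_T^a‖_{L¹(ℝ³)} ≤ C`; in particular the defining series converges in `L¹(ℝ³)`
(the summands being nonnegative, this amounts to summability of their `L¹`-norms). -/
theorem stmt_16 (μ : ℝ) (a : ℕ) (T0 : ℝ) (hT0 : 0 < T0) :
    ∃ C > 0, ∀ T : ℝ, T0 ≤ T →
      (Summable fun n : ℤ => ∫ x : EuclideanSpace ℝ (Fin 3), FTa_term μ a T n x) ∧
      (∫ x : EuclideanSpace ℝ (Fin 3), 2 * T * ∑' n : ℤ, FTa_term μ a T n x) ≤ C := by
  have hπ := Real.pi_pos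
  set V : ℝ := (volume (Metric.ball (0:E3) 1)).toReal with hV
  have hVnn : 0 ≤ V := ENNReal.toReal_nonneg
  set K : ℝ := 3 * V * (4*Real.pi)⁻¹ * (Nat.factorial (a+1) : ℝ) with hK
  have hKnn : 0 ≤ K := by positivity
  set c0 : ℝ := (2 * Real.sqrt (|μ| / (Real.pi * T0) + 1))⁻¹ with hc0
  have hc0pos : 0 < c0 := by
    rw [hc0]
    have : (0:ℝ) < |μ| / (Real.pi * T0) + 1 := by positivity
    positivity
  set A : ℝ := Real.pi * T0 with hA
  have hApos : 0 < A := by positivity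
  set M : ℝ := 2^a * K^2 * (c0⁻¹)^(a+4) * ((Real.sqrt A)⁻¹)^a with hM
  have hMnn : 0 ≤ M := by positivity
  set u : ℤ → ℝ := fun n => (((2*(n:ℝ)+1))^2)⁻¹ with hu_def
  have hu_sum : Summable u := by
    have h0 : Summable (fun m : ℤ => 1/(m:ℝ)^2) :=
      Real.summable_one_div_int_pow.mpr (by norm_num)
    have hinj : Function.Injective (fun n : ℤ => 2*n+1) := by
      intro x y h
      have h' : 2*x+1 = 2*y+1 := h
      omega
    have h1 := h0.comp_injective hinj
    refine h1.congr fun n => ?_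
    simp only [Function.comp, hu_def]
    push_cast
    rw [one_div]
  have hu_nn : ∀ n, 0 ≤ u n := fun n => by positivity
  set S : ℝ := ∑' n : ℤ, u n with hS
  have hSnn : 0 ≤ S := tsum_nonneg hu_nn
  refine ⟨2 * M * (Real.pi^2 * T0)⁻¹ * S + 1, by positivity, fun T hT => ?_⟩
  have hTpos : 0 < T := lt_of_lt_of_le hT0 hT
  -- per-n data
  set ω : ℤ → ℝ := fun n => Real.pi * (2*(n:ℝ)+1) * T with hω_def
  have hωabs : ∀ n : ℤ, Real.pi * T0 ≤ |ω n| := by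
    intro n
    have h21 : (1:ℝ) ≤ |2*(n:ℝ)+1| := by
      have he : (2*(n:ℝ)+1) = ((2*n+1 : ℤ):ℝ) := by push_cast; ring
      rw [he, ← Int.cast_abs]
      exact_mod_cast Int.one_le_abs (by omega : (2*n+1:ℤ) ≠ 0)
    have : |ω n| = Real.pi * |2*(n:ℝ)+1| * T := by
      rw [hω_def]
      rw [abs_mul, abs_mul, abs_of_pos hπ, abs_of_pos hTpos]
    rw [this]
    have e1 : Real.pi * T0 ≤ Real.pi * T := by nlinarith
    have e2 : Real.pi * T ≤ Real.pi * |2*(n:ℝ)+1| * T := by nlinarith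
    linarith
  have hωpos : ∀ n : ℤ, 0 < |ω n| := fun n => lt_of_lt_of_le (by positivity) (hωabs n)
  set s : ℤ → ℝ := fun n => c0 * Real.sqrt |ω n| with hs_def
  have hspos : ∀ n, 0 < s n := fun n => by
    have := hωpos n
    have : 0 < Real.sqrt |ω n| := Real.sqrt_pos.mpr this
    positivity
  set w1 : ℤ → ℂ := fun n => Complex.I * ((ω n : ℝ) : ℂ) with hw1
  set w2 : ℤ → ℂ := fun n => -(Complex.I * ((ω n : ℝ) : ℂ)) with hw2
  have hd1 : ∀ n, s n ≤ dcoef μ (w1 n) := by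
    intro n
    refine d_lb μ hT0 (hωabs n) _ ?_ ?_
    · simp [hw1]
    · simp [hw1, abs_neg]
  have hd2 : ∀ n, s n ≤ dcoef μ (w2 n) := by
    intro n
    refine d_lb μ hT0 (hωabs n) _ ?_ ?_
    · simp [hw2]
    · simp [hw2, abs_neg]
  have hd1p : ∀ n, 0 < dcoef μ (w1 n) := fun n => lt_of_lt_of_le (hspos n) (hd1 n)
  have hd2p : ∀ n, 0 < dcoef μ (w2 n) := fun n => lt_of_lt_of_le (hspos n) (hd2 n)
  -- integral bound for Fb factors
  have hFb_le : ∀ (n : ℤ) (d : ℝ) (b : ℕ), b ≤ a → s n ≤ d →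
      ∫ x : E3, Fb d b x ≤ K * ((s n)⁻¹)^(b+2) := by
    intro n d b hb hd
    have hdp : 0 < d := lt_of_lt_of_le (hspos n) hd
    rw [integral_Fb hdp b, ← hV, hK]
    refine mul_le_mul ?_ ?_ (by positivity) (by positivity)
    · have hfac : (Nat.factorial (b+1) : ℝ) ≤ (Nat.factorial (a+1) : ℝ) := by
        exact_mod_cast Nat.factorial_le (by omega)
      have h3V : (0:ℝ) ≤ 3 * V * (4*Real.pi)⁻¹ := by positivity
      calc 3 * V * (4*Real.pi)⁻¹ * (Nat.factorial (b+1) : ℝ)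
          ≤ 3 * V * (4*Real.pi)⁻¹ * (Nat.factorial (a+1) : ℝ) :=
            mul_le_mul_of_nonneg_left hfac h3V
        _ = _ := by ring
    · refine pow_le_pow_left₀ (by positivity) ?_ _
      rw [one_div]
      exact inv_anti₀ (hspos n) hd
  have hFb_nn : ∀ (d : ℝ) (b : ℕ), 0 ≤ ∫ x : E3, Fb d b x :=
    fun d b => integral_nonneg (Fb_nonneg d b)
  -- FTa_term facts
  have hFTa_nn : ∀ n x, 0 ≤ FTa_term μ a T n x := by
    intro n x
    refine Finset.sum_nonneg fun b _ => mul_nonneg (by positivity) ?_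
    exact integral_nonneg fun y => mul_nonneg (by positivity) (by positivity)
  have hFTa_int : ∀ n : ℤ, Integrable (FTa_term μ a T n) := by
    intro n
    have : FTa_term μ a T n = fun x => ∑ b ∈ Finset.range (a+1), (a.choose b : ℝ) *
        wconv μ b (a-b) (w1 n) (w2 n) x := by
      funext x; rfl
    rw [this]
    refine integrable_finset_sum _ fun b _ => ?_
    exact ((wconv_integrable μ (hd1p n) (hd2p n)).const_mul _)
  -- value of the integral
  have hIn_eq : ∀ n : ℤ, ∫ x : E3, FTa_term μ a T n x
      = ∑ b ∈ Finset.range (a+1), (a.choose b : ℝ) *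
          ((∫ x : E3, Fb (dcoef μ (w1 n)) b x) * (∫ x : E3, Fb (dcoef μ (w2 n)) (a-b) x)) := by
    intro n
    have h1 : ∫ x : E3, FTa_term μ a T n x = ∑ b ∈ Finset.range (a+1),
        ∫ x : E3, (a.choose b : ℝ) * wconv μ b (a-b) (w1 n) (w2 n) x := by
      rw [← integral_finset_sum]
      · rfl
      · exact fun b _ => (wconv_integrable μ (hd1p n) (hd2p n)).const_mul _
    rw [h1]
    refine Finset.sum_congr rfl fun b _ => ?_
    rw [integral_const_mul, wconv_integral μ (hd1p n) (hd2p n)]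
  -- the bound
  set β : ℤ → ℝ := fun n => M * (Real.pi^2 * T0 * T)⁻¹ * u n with hβ
  have hβ_sum : Summable β := (hu_sum.mul_left _)
  have hIn_le : ∀ n : ℤ, ∫ x : E3, FTa_term μ a T n x ≤ β n := by
    intro n
    rw [hIn_eq n]
    have hstep : ∀ b ∈ Finset.range (a+1),
        (a.choose b : ℝ) * ((∫ x : E3, Fb (dcoef μ (w1 n)) b x) *
          (∫ x : E3, Fb (dcoef μ (w2 n)) (a-b) x))
        ≤ (a.choose b : ℝ) * (K^2 * ((s n)⁻¹)^(a+4)) := by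
      intro b hb
      have hba : b ≤ a := by
        have := Finset.mem_range.mp hb; omega
      refine mul_le_mul_of_nonneg_left ?_ (by positivity)
      have h1 := hFb_le n _ b hba (hd1 n)
      have h2 := hFb_le n _ (a-b) (by omega) (hd2 n)
      calc (∫ x : E3, Fb (dcoef μ (w1 n)) b x) * (∫ x : E3, Fb (dcoef μ (w2 n)) (a-b) x)
          ≤ (K * ((s n)⁻¹)^(b+2)) * (K * ((s n)⁻¹)^((a-b)+2)) := by
            exact mul_le_mul h1 h2 (hFb_nn _ _) (by positivity)
        _ = K^2 * (((s n)⁻¹)^(b+2) * ((s n)⁻¹)^((a-b)+2)) := by ring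
        _ = K^2 * ((s n)⁻¹)^(a+4) := by
            rw [← pow_add, show (b+2) + ((a-b)+2) = a + 4 by omega]
    have hsum_le := Finset.sum_le_sum hstep
    refine le_trans hsum_le ?_
    rw [← Finset.sum_mul]
    have hchoose : ∑ b ∈ Finset.range (a+1), (a.choose b : ℝ) = 2^a := by
      rw [← Nat.cast_sum]
      rw [Nat.sum_range_choose]
      push_cast; ring
    rw [hchoose]
    -- now: 2^a * (K^2 * (s n)⁻¹^(a+4)) ≤ β n
    rw [hβ]
    have hsinv : ((s n)⁻¹)^(a+4)
        = (c0⁻¹)^(a+4) * (((Real.sqrt |ω n|)⁻¹)^a * ((Real.sqrt |ω n|)⁻¹)^4) := by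
      rw [hs_def]
      rw [mul_inv, mul_pow, ← pow_add]
    have h4 : ((Real.sqrt |ω n|)⁻¹)^4 = (|ω n|^2)⁻¹ := by
      rw [inv_pow, show (4:ℕ) = 2*2 from rfl, pow_mul, Real.sq_sqrt (hωpos n).le]
    have ha' : ((Real.sqrt |ω n|)⁻¹)^a ≤ ((Real.sqrt A)⁻¹)^a := by
      refine pow_le_pow_left₀ (by positivity) ?_ _
      refine inv_anti₀ (Real.sqrt_pos.mpr hApos) ?_
      exact Real.sqrt_le_sqrt (hωabs n)
    have homega : (|ω n|^2)⁻¹ ≤ (Real.pi^2 * T0 * T)⁻¹ * u n := by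
      rw [sq_abs, hω_def]
      have hωsq : (Real.pi * (2*(n:ℝ)+1) * T)^2
          = (Real.pi^2 * (2*(n:ℝ)+1)^2) * T^2 := by ring
      rw [hωsq, hu_def]
      have h21 : (0:ℝ) < (2*(n:ℝ)+1)^2 := by
        have he : (2*(n:ℝ)+1) = ((2*n+1 : ℤ):ℝ) := by push_cast; ring
        have : (2*(n:ℝ)+1) ≠ 0 := by
          rw [he]; exact_mod_cast (by omega : (2*n+1 : ℤ) ≠ 0)
        positivity
      rw [← mul_inv]
      refine inv_anti₀ (by positivity) ?_
      nlinarith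
    calc 2^a * (K^2 * ((s n)⁻¹)^(a+4))
        ≤ 2^a * (K^2 * ((c0⁻¹)^(a+4) * (((Real.sqrt A)⁻¹)^a * ((Real.pi^2 * T0 * T)⁻¹ * u n)))) := by
          rw [hsinv, h4]
          refine mul_le_mul_of_nonneg_left ?_ (by positivity)
          refine mul_le_mul_of_nonneg_left ?_ (by positivity)
          refine mul_le_mul_of_nonneg_left ?_ (by positivity)
          exact mul_le_mul ha' homega (by positivity) (by positivity)
      _ = M * (Real.pi^2 * T0 * T)⁻¹ * u n := by rw [hM]; ring
  -- summability of the integrals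
  have hIn_nn : ∀ n : ℤ, 0 ≤ ∫ x : E3, FTa_term μ a T n x :=
    fun n => integral_nonneg (hFTa_nn n)
  have hsummable : Summable fun n : ℤ => ∫ x : E3, FTa_term μ a T n x :=
    Summable.of_nonneg_of_le hIn_nn hIn_le hβ_sum
  refine ⟨hsummable, ?_⟩
  -- interchange integral and tsum
  have hlint : ∀ n : ℤ, ∫⁻ x : E3, ‖FTa_term μ a T n x‖₊
      = ENNReal.ofReal (∫ x : E3, FTa_term μ a T n x) := by
    intro n
    rw [ofReal_integral_eq_lintegral_ofReal (hFTa_int n)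
      (Filter.Eventually.of_forall (hFTa_nn n))]
    refine lintegral_congr fun x => ?_
    exact Real.enorm_eq_ofReal (hFTa_nn n x)
  have hne : (∑' n : ℤ, ∫⁻ x : E3, ‖FTa_term μ a T n x‖₊) ≠ ⊤ := by
    have hle : (∑' n : ℤ, ∫⁻ x : E3, ‖FTa_term μ a T n x‖₊)
        ≤ ∑' n : ℤ, ENNReal.ofReal (β n) := by
      refine ENNReal.tsum_le_tsum fun n => ?_
      rw [hlint n]
      exact ENNReal.ofReal_le_ofReal (hIn_le n)
    have : ∑' n : ℤ, ENNReal.ofReal (β n) = ENNReal.ofReal (∑' n, β n) :=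
      (ENNReal.ofReal_tsum_of_nonneg (fun n => by
        refine mul_nonneg (by positivity) (hu_nn n)) hβ_sum).symm
    rw [this] at hle
    exact ne_top_of_le_ne_top ENNReal.ofReal_ne_top hle
  have hitsum : ∫ x : E3, (∑' n : ℤ, FTa_term μ a T n x)
      = ∑' n : ℤ, ∫ x : E3, FTa_term μ a T n x :=
    integral_tsum (fun n => (hFTa_int n).aestronglyMeasurable) hne
  calc ∫ x : E3, 2 * T * ∑' n : ℤ, FTa_term μ a T n x
      = 2 * T * ∫ x : E3, (∑' n : ℤ, FTa_term μ a T n x) := by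
        rw [integral_const_mul]
    _ = 2 * T * ∑' n : ℤ, ∫ x : E3, FTa_term μ a T n x := by rw [hitsum]
    _ ≤ 2 * T * ∑' n : ℤ, β n := by
        refine mul_le_mul_of_nonneg_left ?_ (by positivity)
        exact Summable.tsum_le_tsum hIn_le hsummable hβ_sum
    _ = 2 * T * (M * (Real.pi^2 * T0 * T)⁻¹ * S) := by
        rw [hβ, hS]
        rw [tsum_mul_left]
    _ = 2 * M * (Real.pi^2 * T0)⁻¹ * S := by
        field_simp
    _ ≤ 2 * M * (Real.pi^2 * T0)⁻¹ * S + 1 := by linarith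

end Main
end
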